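/- arXiv:2307.11064 — 6 statements merged into one kernel-verified Lean document; each statement's English description precedes it below -/
import Mathlib

section
/- Let Γ be a group, H₁,...,H_k, Γ' subgroups of Γ, and E a uniformly convex real Banach space. Assume that each pair (Γ, H_i) has relative property (F_E), that Γ' ⊆ ⟨H₁,...,H_k⟩, and that H₁,...,H_k boundedly generate Γ', i.e. there is N ∈ ℕ such that every g ∈ Γ' is a product of at most N elements of H₁ ∪ ... ∪ H_k. Then the pair (Γ, Γ') has relative property (F_E): every affine isometric action of Γ on E has a point fixed by every element of Γ'. -/
/-!
Each `ρ(Hᵢ)` fixes a point `ξᵢ`, so an element of `Hᵢ` moves `0` by at most `2‖ξᵢ‖`; by bounded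
generation the `Γ'`-orbit of `0` is bounded. In a uniformly convex Banach space a nonempty bounded
set `S` has a unique Chebyshev center, the minimiser of `x ↦ sup_{s ∈ S} ‖x - s‖`: uniform
convexity makes the midpoint of two far-apart near-minimisers strictly better, so near-minimisers
form a Cauchy family. Every isometry permuting `S` fixes this center.
-/

open Bornology Metric Filter Topology

section UniformConvex

variable {E : Type*} [SeminormedAddCommGroup E] [NormedSpace ℝ E] [UniformConvexSpace E] {ε : ℝ}

theorem exists_forall_dist_midpoint_le (hε : 0 < ε) :
    ∃ δ > 0, ∀ ⦃R : ℝ⦄ ⦃x y z : E⦄, dist x z ≤ R → dist y z ≤ R → ε * R ≤ dist x y →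
      dist (midpoint ℝ x y) z ≤ (1 - δ) * R := by
  obtain ⟨δ, hδ, hconv⟩ := exists_forall_closed_ball_dist_add_le_two_sub E hε
  refine ⟨δ / 2, half_pos hδ, fun R x y z hx hy hxy => ?_⟩
  have hmid : dist (midpoint ℝ x y) z = ‖(x - z) + (y - z)‖ / 2 := by
    have : (⅟2 : ℝ) • (x + y) - z = (2⁻¹ : ℝ) • ((x - z) + (y - z)) := by
      rw [invOf_eq_inv]; module
    rw [dist_eq_norm, midpoint_eq_smul_add, this, norm_smul_of_nonneg (by norm_num)]
    ring
  rcases (dist_nonneg.trans hx).eq_or_lt with rfl | hR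
  · rw [hmid, mul_zero, div_nonpos_iff]
    refine .inr ⟨?_, zero_le_two⟩
    rw [dist_eq_norm] at hx hy
    linarith [norm_add_le (x - z) (y - z)]
  have hscale : ∀ w : E, ‖R⁻¹ • w‖ = ‖w‖ / R := fun w => by
    rw [norm_smul_of_nonneg (inv_nonneg.2 hR.le), inv_mul_eq_div]
  have key := hconv (x := R⁻¹ • (x - z)) (y := R⁻¹ • (y - z))
    (by rw [hscale, div_le_one hR, ← dist_eq_norm]; exact hx)
    (by rw [hscale, div_le_one hR, ← dist_eq_norm]; exact hy)
    (by rw [← smul_sub, sub_sub_sub_cancel_right, hscale, le_div_iff₀ hR, ← dist_eq_norm]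
        exact hxy)
  rw [← smul_add, hscale, div_le_iff₀ hR] at key
  rw [hmid]
  linarith

end UniformConvex

section SupDist

variable {α : Type*} [PseudoMetricSpace α] {s : Set α} {x y : α} {c : ℝ}

/-- Junk value `0` when `s` is unbounded. -/
noncomputable def supDist (x : α) (s : Set α) : ℝ := sSup (dist x '' s)

noncomputable def chebyshevRadius (s : Set α) : ℝ := ⨅ x, supDist x s

theorem supDist_nonneg : 0 ≤ supDist x s :=
  Real.sSup_nonneg <| Set.forall_mem_image.2 fun _ _ => dist_nonneg

theorem dist_le_supDist (hs : IsBounded s) (hy : y ∈ s) : dist x y ≤ supDist x s := by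
  obtain ⟨r, hr⟩ := (isBounded_iff_subset_closedBall x).1 hs
  refine le_csSup ⟨r, Set.forall_mem_image.2 fun z hz => ?_⟩ (Set.mem_image_of_mem _ hy)
  rw [dist_comm]
  exact hr hz

theorem supDist_le (h : ∀ y ∈ s, dist x y ≤ c) (hc : 0 ≤ c) : supDist x s ≤ c :=
  Real.sSup_le (Set.forall_mem_image.2 h) hc

theorem supDist_le_supDist_add_dist (hs : IsBounded s) :
    supDist x s ≤ supDist y s + dist x y :=
  supDist_le (fun z hz => by linarith [dist_triangle x y z, dist_le_supDist (x := y) hs hz])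
    (add_nonneg supDist_nonneg dist_nonneg)

theorem lipschitzWith_supDist (hs : IsBounded s) : LipschitzWith 1 (supDist · s) :=
  LipschitzWith.of_le_add fun _ _ => supDist_le_supDist_add_dist hs

theorem supDist_apply_le {f : α → α} (hf : Isometry f) (hs : IsBounded s)
    (hfs : s ⊆ f '' s) : supDist (f x) s ≤ supDist x s := by
  refine supDist_le (fun y hy => ?_) supDist_nonneg
  obtain ⟨z, hz, rfl⟩ := hfs hy
  rw [hf.dist_eq]
  exact dist_le_supDist hs hz

theorem chebyshevRadius_le_supDist : chebyshevRadius s ≤ supDist x s :=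
  ciInf_le ⟨0, Set.forall_mem_range.2 fun _ => supDist_nonneg⟩ x

theorem chebyshevRadius_nonneg [Nonempty α] : 0 ≤ chebyshevRadius s :=
  le_ciInf fun _ => supDist_nonneg

theorem exists_supDist_lt [Nonempty α] (h : chebyshevRadius s < c) : ∃ x, supDist x s < c :=
  exists_lt_of_ciInf_lt h

end SupDist

section ChebyshevCenter

variable {E : Type*} [NormedAddCommGroup E] [NormedSpace ℝ E] [UniformConvexSpace E] {s : Set E}

theorem exists_forall_dist_le_of_supDist_le (hne : s.Nonempty) (hs : IsBounded s)
    {ε : ℝ} (hε : 0 < ε) : ∃ η > 0, ∀ ⦃x y : E⦄, supDist x s ≤ chebyshevRadius s + η →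
      supDist y s ≤ chebyshevRadius s + η → dist x y ≤ ε := by
  have hr₀ : 0 < chebyshevRadius s + 1 := by linarith [chebyshevRadius_nonneg (s := s)]
  set r₀ := chebyshevRadius s
  obtain ⟨δ, hδ, hmid⟩ := exists_forall_dist_midpoint_le (E := E) (div_pos hε hr₀)
  set η := min 1 (δ * ε / 2)
  refine ⟨η, by positivity, fun x y hx hy => ?_⟩
  obtain ⟨z, hz⟩ := hne
  have hxz := (dist_le_supDist hs hz).trans hx
  have hyz := (dist_le_supDist hs hz).trans hy
  by_cases hxy : ε / (r₀ + 1) * (r₀ + η) ≤ dist x y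
  · -- `r₀ ≤ supDist (midpoint ℝ x y) s ≤ (1 - δ) * (r₀ + η)` forces `r₀ + η ≤ η / δ ≤ ε / 2`
    have hm : r₀ ≤ (1 - δ) * (r₀ + η) := chebyshevRadius_le_supDist.trans <|
      supDist_le (fun w hw => hmid ((dist_le_supDist hs hw).trans hx)
        ((dist_le_supDist hs hw).trans hy) hxy) (dist_nonneg.trans (hmid hxz hyz hxy))
    have : δ * (r₀ + η) ≤ δ * (ε / 2) := by linarith [min_le_right 1 (δ * ε / 2)]
    linarith [le_of_mul_le_mul_left this hδ, dist_triangle_right x y z]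
  · calc dist x y ≤ ε / (r₀ + 1) * (r₀ + η) := (not_le.1 hxy).le
      _ ≤ ε / (r₀ + 1) * (r₀ + 1) := by gcongr; exact min_le_left _ _
      _ = ε := div_mul_cancel₀ _ hr₀.ne'

theorem eq_of_supDist_le_chebyshevRadius (hne : s.Nonempty) (hs : IsBounded s)
    {x y : E} (hx : supDist x s ≤ chebyshevRadius s) (hy : supDist y s ≤ chebyshevRadius s) :
    x = y :=
  eq_of_forall_dist_le fun _ hε =>
    let ⟨_, hη, h⟩ := exists_forall_dist_le_of_supDist_le hne hs hε
    h (hx.trans (le_add_of_nonneg_right hη.le)) (hy.trans (le_add_of_nonneg_right hη.le))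

theorem exists_supDist_eq_chebyshevRadius [CompleteSpace E] (hne : s.Nonempty)
    (hs : IsBounded s) : ∃ c : E, supDist c s = chebyshevRadius s := by
  choose x hx using fun n : ℕ => exists_supDist_lt (s := s)
    (lt_add_of_pos_right (chebyshevRadius s) (Nat.one_div_pos_of_nat (n := n)))
  have hlim : Tendsto (fun n => supDist (x n) s) atTop (𝓝 (chebyshevRadius s)) :=
    tendsto_of_tendsto_of_tendsto_of_le_of_le tendsto_const_nhds
      (by simpa using tendsto_one_div_add_atTop_nhds_zero_nat.const_add (chebyshevRadius s))
      (fun _ => chebyshevRadius_le_supDist) (fun n => (hx n).le)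
  have hcauchy : CauchySeq x := by
    refine Metric.cauchySeq_iff.2 fun ε hε => ?_
    obtain ⟨η, hη, hclose⟩ := exists_forall_dist_le_of_supDist_le hne hs (half_pos hε)
    obtain ⟨N, hN⟩ := eventually_atTop.1 <|
      hlim.eventually (ge_mem_nhds (lt_add_of_pos_right (chebyshevRadius s) hη))
    exact ⟨N, fun m hm n hn => (hclose (hN m hm) (hN n hn)).trans_lt (half_lt_self hε)⟩
  obtain ⟨c, hc⟩ := cauchySeq_tendsto_of_complete hcauchy
  exact ⟨c, tendsto_nhds_unique (((lipschitzWith_supDist hs).continuous.tendsto c).comp hc) hlim⟩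

theorem exists_forall_isometry_apply_eq [CompleteSpace E] (hne : s.Nonempty)
    (hs : IsBounded s) :
    ∃ c : E, ∀ f : E → E, Isometry f → s ⊆ f '' s → f c = c := by
  obtain ⟨c, hc⟩ := exists_supDist_eq_chebyshevRadius hne hs
  exact ⟨c, fun f hf hfs => eq_of_supDist_le_chebyshevRadius hne hs
    ((supDist_apply_le hf hs hfs).trans hc.le) hc.le⟩

end ChebyshevCenter

section AffineIsometricAction

theorem Isometry.dist_apply_le_of_isFixedPt {α : Type*} [PseudoMetricSpace α] {f : α → α}
    (hf : Isometry f) {q : α} (hq : Function.IsFixedPt f q) (p : α) :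
    dist (f p) p ≤ 2 * dist p q := by
  calc dist (f p) p ≤ dist (f p) (f q) + dist (f q) p := dist_triangle _ _ _
    _ = 2 * dist p q := by rw [hf.dist_eq, hq.eq, dist_comm q]; ring

variable {𝕜 V P M : Type*} [NormedField 𝕜] [SeminormedAddCommGroup V] [NormedSpace 𝕜 V]
  [PseudoMetricSpace P] [NormedAddTorsor V P] [Monoid M]

theorem dist_map_list_prod_le (ρ : M →* (P ≃ᵃⁱ[𝕜] P)) {p : P} {C : ℝ} :
    ∀ l : List M, (∀ g ∈ l, dist (ρ g p) p ≤ C) → dist (ρ l.prod p) p ≤ l.length * C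
  | [], _ => by simp
  | g :: l, h => by
    have ih := dist_map_list_prod_le ρ l fun x hx => h x (List.mem_cons_of_mem g hx)
    calc dist (ρ (g :: l).prod p) p ≤ dist (ρ g (ρ l.prod p)) (ρ g p) + dist (ρ g p) p := by
          rw [List.prod_cons, map_mul, AffineIsometryEquiv.coe_mul, Function.comp_apply]
          exact dist_triangle _ _ _
      _ ≤ l.length * C + C := by
          rw [(ρ g).dist_map]
          exact add_le_add ih (h g List.mem_cons_self)
      _ = (g :: l).length * C := by push_cast [List.length_cons]; ring

theorem exists_forall_mem_map_apply_eq_of_isBounded {E G : Type*} [NormedAddCommGroup E]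
    [NormedSpace ℝ E] [CompleteSpace E] [UniformConvexSpace E] [Group G]
    (ρ : G →* (E ≃ᵃⁱ[ℝ] E)) (K : Subgroup G) (p : E)
    (hK : IsBounded ((fun g => ρ g p) '' K)) : ∃ ξ : E, ∀ g ∈ K, ρ g ξ = ξ := by
  obtain ⟨ξ, hξ⟩ := exists_forall_isometry_apply_eq ⟨_, Set.mem_image_of_mem _ K.one_mem⟩ hK
  refine ⟨ξ, fun g hg => hξ _ (ρ g).isometry ?_⟩
  rintro _ ⟨h, hh, rfl⟩
  refine ⟨ρ (g⁻¹ * h) p, ⟨g⁻¹ * h, K.mul_mem (K.inv_mem hg) hh, rfl⟩, ?_⟩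
  rw [← Function.comp_apply (f := ρ g), ← AffineIsometryEquiv.coe_mul, ← map_mul,
    mul_inv_cancel_left]

end AffineIsometricAction

theorem bounded_generation_relative_fixed_point_general
    {Γ : Type*} [Group Γ] {k : ℕ} (H : Fin k → Subgroup Γ) (Γ' : Subgroup Γ)
    {E : Type*} [NormedAddCommGroup E] [NormedSpace ℝ E] [CompleteSpace E]
    [UniformConvexSpace E]
    (hrel : ∀ i : Fin k, ∀ ρ : Γ →* (E ≃ᵃⁱ[ℝ] E), ∃ ξ : E, ∀ h ∈ H i, (ρ h) ξ = ξ)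
    (hbg : ∃ N : ℕ, ∀ g ∈ Γ', ∃ l : List Γ,
      l.length ≤ N ∧ (∀ x ∈ l, ∃ i, x ∈ H i) ∧ l.prod = g)
    (ρ : Γ →* (E ≃ᵃⁱ[ℝ] E)) :
    ∃ ξ : E, ∀ g ∈ Γ', (ρ g) ξ = ξ := by
  obtain ⟨N, hN⟩ := hbg
  choose ξ hξ using fun i => hrel i ρ
  set C := 2 * ∑ i, dist (0 : E) (ξ i)
  have hgen : ∀ x, (∃ i, x ∈ H i) → dist (ρ x 0) 0 ≤ C := by
    rintro x ⟨i, hx⟩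
    exact ((ρ x).isometry.dist_apply_le_of_isFixedPt (hξ i x hx) 0).trans <|
      mul_le_mul_of_nonneg_left
        (Finset.single_le_sum (fun j _ => dist_nonneg) (Finset.mem_univ i)) zero_le_two
  refine exists_forall_mem_map_apply_eq_of_isBounded ρ Γ' 0
    ((isBounded_iff_subset_closedBall 0).2 ⟨N * C, ?_⟩)
  rintro _ ⟨g, hg, rfl⟩
  obtain ⟨l, hlen, hl, rfl⟩ := hN g hg
  have hC : 0 ≤ C := by positivity
  exact (dist_map_list_prod_le ρ l fun x hx => hgen x (hl x hx)).trans (by gcongr)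

/-- **the bounded generation lemma.** Let `Γ` be a group,
`H₁, …, H_k, Γ'` subgroups of `Γ`, and `E` a uniformly convex real Banach space.
Assume that each pair `(Γ, Hᵢ)` has relative property `(F_E)`, that
`Γ' ⊆ ⟨H₁, …, H_k⟩`, and that `H₁, …, H_k` boundedly generate `Γ'`.  Then the pair
`(Γ, Γ')` has relative property `(F_E)`: every affine isometric action of `Γ` on `E`
has a point fixed by every element of `Γ'`. -/
theorem bounded_generation_relative_fixed_point
    {Γ : Type*} [Group Γ] {k : ℕ} (H : Fin k → Subgroup Γ) (Γ' : Subgroup Γ)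
    {E : Type*} [NormedAddCommGroup E] [NormedSpace ℝ E] [CompleteSpace E]
    [UniformConvexSpace E]
    (hrel : ∀ i : Fin k, ∀ ρ : Γ →* (E ≃ᵃⁱ[ℝ] E), ∃ ξ : E, ∀ h ∈ H i, (ρ h) ξ = ξ)
    (hsub : Γ' ≤ ⨆ i, H i)
    (hbg : ∃ N : ℕ, ∀ g ∈ Γ', ∃ l : List Γ,
      l.length ≤ N ∧ (∀ x ∈ l, ∃ i, x ∈ H i) ∧ l.prod = g)
    (ρ : Γ →* (E ≃ᵃⁱ[ℝ] E)) :
    ∃ ξ : E, ∀ g ∈ Γ', (ρ g) ξ = ξ :=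
  bounded_generation_relative_fixed_point_general H Γ' hrel hbg ρ
end

section
/- There is a universal constant C > 0 with the following property. Fix m ≥ 1 and let d, d', d₂ ∈ ℕ with d ≤ d₂ and d' ≤ d₂. For every real Banach space E, every affine isometric action ρ of H₃(ℤ[t₁,...,t_m]) on E, every ξ ∈ E and every p ∈ Poly(d,d'), writing η = (1/|Poly(d₂,d₂)|)·∑_{q∈Poly(d₂,d₂)} ρ(z(q))ξ, one has ‖ρ(z(p))η − η‖ ≤ C·(d+m)^m·(1/2)^{d₂−d'}·max_{t̲∈B^d} ‖ξ − ρ(z(2^{d₂}·t̲))ξ‖. -/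
/-- The Heisenberg group over a commutative ring `R`: upper unitriangular `3 × 3`
matrices, recorded by their three above-diagonal entries.  `⟨a, b, c⟩` corresponds to
the matrix `[[1, a, c], [0, 1, b], [0, 0, 1]]`. -/
structure Heisenberg (R : Type*) [CommRing R] where
  a : R
  b : R
  c : R

namespace Heisenberg

variable {R : Type*} [CommRing R]

instance : Mul (Heisenberg R) :=
  ⟨fun p q => ⟨p.a + q.a, p.b + q.b, p.c + q.c + p.a * q.b⟩⟩

instance : One (Heisenberg R) := ⟨⟨0, 0, 0⟩⟩

instance : Inv (Heisenberg R) := ⟨fun p => ⟨-p.a, -p.b, -p.c + p.a * p.b⟩⟩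

theorem mul_def (p q : Heisenberg R) :
    p * q = ⟨p.a + q.a, p.b + q.b, p.c + q.c + p.a * q.b⟩ := rfl

theorem one_def : (1 : Heisenberg R) = ⟨0, 0, 0⟩ := rfl

theorem inv_def (p : Heisenberg R) : p⁻¹ = ⟨-p.a, -p.b, -p.c + p.a * p.b⟩ := rfl

instance : Group (Heisenberg R) where
  mul_assoc p q r := by
    simp only [mul_def, mk.injEq]
    exact ⟨by ring, by ring, by ring⟩
  one_mul p := by
    cases p
    simp only [one_def, mul_def, mk.injEq]
    exact ⟨by ring, by ring, by ring⟩
  mul_one p := by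
    cases p
    simp only [one_def, mul_def, mk.injEq]
    exact ⟨by ring, by ring, by ring⟩
  inv_mul_cancel p := by
    cases p
    simp only [one_def, mul_def, inv_def, mk.injEq]
    exact ⟨by ring, by ring, by ring⟩

/-- The element `x(p)`, with `p` in position `(1,2)`. -/
def x (p : R) : Heisenberg R := ⟨p, 0, 0⟩

/-- The element `y(p)`, with `p` in position `(2,3)`. -/
def y (p : R) : Heisenberg R := ⟨0, p, 0⟩

/-- The central element `z(p)`, with `p` in position `(1,3)`. -/
def z (p : R) : Heisenberg R := ⟨0, 0, p⟩

end Heisenberg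

/-- Index type for monomials of total degree at most `d` in `m` variables. -/
def DegIdx (m d : ℕ) := {v : Fin m → Fin (d + 1) // (∑ i, ((v i : ℕ))) ≤ d}

instance (m d : ℕ) : Fintype (DegIdx m d) := by unfold DegIdx; infer_instance
instance (m d : ℕ) : DecidableEq (DegIdx m d) := by unfold DegIdx; infer_instance

/-- The monomial `∏ i, t_i ^ (v i)` corresponding to an index `v`. -/
noncomputable def monOf {m d : ℕ} (v : DegIdx m d) : MvPolynomial (Fin m) ℤ :=
  ∏ i, MvPolynomial.X i ^ ((v.1 i : ℕ))

/-- `Poly(d, d')`: the finite set of integer polynomials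
`∑_{t̲ ∈ B^d} c_{t̲}·t̲` with `0 ≤ c_{t̲} ≤ 2^{d'} − 1`, where `B^d` is the set of
monomials of total degree at most `d`. -/
noncomputable def PolyFinset (m d d' : ℕ) : Finset (MvPolynomial (Fin m) ℤ) :=
  Finset.image
    (fun c : DegIdx m d → Fin (2 ^ d') =>
      ∑ v : DegIdx m d, MvPolynomial.C ((c v : ℕ) : ℤ) * monOf v)
    Finset.univ

/-- `B^d`: the set of monomials of total degree at most `d` (including `1`). -/
def BSet (m d : ℕ) : Set (MvPolynomial (Fin m) ℤ) :=
  {p | ∃ v : Fin m → ℕ, (∑ i, v i) ≤ d ∧ p = ∏ i, MvPolynomial.X i ^ v i}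

/-- The average `(1/|Poly(d₂,d₂)|)·∑_{q ∈ Poly(d₂,d₂)} ρ(z(q))ξ`. -/
noncomputable def zAvg {m : ℕ} {E : Type*} [NormedAddCommGroup E] [NormedSpace ℝ E]
    (ρ : Heisenberg (MvPolynomial (Fin m) ℤ) →* (E ≃ᵃⁱ[ℝ] E)) (d₂ : ℕ) (ξ : E) : E :=
  ((PolyFinset m d₂ d₂).card : ℝ)⁻¹ • ∑ q ∈ PolyFinset m d₂ d₂, (ρ (Heisenberg.z q)) ξ

/-!
Index `Poly(d₂,d₂)` by coefficient vectors `c ∈ {0, …, 2^d₂ - 1}^(B^d₂)`, so that `η` is the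
average of `ρ(z(∑ c_t t))ξ` over a discrete box. Translating by one monomial `t` telescopes along
the `t`-th coordinate: only two opposite faces of the box survive, and they differ by
`ρ(z(2^d₂ t))`, so `‖ρ(z(t))η - η‖ ≤ 2^(-d₂) ‖ρ(z(2^d₂ t))ξ - ξ‖`. Since `x ↦ ‖ρ(z(x))η - η‖` is
subadditive, `p = ∑ a_t t` with `a_t < 2^d'` moves `η` by at most
`|B^d| 2^(d'-d₂) max_t ‖ρ(z(2^d₂ t))ξ - ξ‖`, and `|B^d| ≤ (d+1)^m ≤ (d+m)^m`.
-/

open Finset Multiplicative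

theorem AffineMap.map_inv_card_smul_sum {E F : Type*} [NormedAddCommGroup E] [NormedSpace ℝ E]
    [NormedAddCommGroup F] [NormedSpace ℝ F] (f : E →ᵃ[ℝ] F) {α : Type*} {s : Finset α}
    (hs : s.Nonempty) (p : α → E) :
    f ((#s : ℝ)⁻¹ • ∑ i ∈ s, p i) = (#s : ℝ)⁻¹ • ∑ i ∈ s, f (p i) := by
  have hs' : (#s : ℝ) ≠ 0 := by exact_mod_cast hs.card_pos.ne'
  rw [f.decomp]
  simp only [Pi.add_apply, map_smul, map_sum, sum_add_distrib, sum_const, smul_add]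
  rw [← Nat.cast_smul_eq_nsmul ℝ, inv_smul_smul₀ hs']

theorem AffineIsometryEquiv.norm_mul_apply_sub_le {E : Type*} [NormedAddCommGroup E]
    [NormedSpace ℝ E] (f g : E ≃ᵃⁱ[ℝ] E) (x : E) :
    ‖(f * g) x - x‖ ≤ ‖f x - x‖ + ‖g x - x‖ :=
  calc ‖(f * g) x - x‖ = ‖(f (g x) - f x) + (f x - x)‖ := by rw [sub_add_sub_cancel]; rfl
    _ ≤ ‖f (g x) - f x‖ + ‖f x - x‖ := norm_add_le _ _
    _ = ‖f x - x‖ + ‖g x - x‖ := by rw [← dist_eq_norm, f.dist_map, dist_eq_norm, add_comm]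

theorem Fintype.sum_eq_sum_sum_funSplitAt {ι β M : Type*} [Fintype ι] [DecidableEq ι]
    [Fintype β] [AddCommMonoid M] (v : ι) (f : (ι → β) → M) :
    ∑ c, f c = ∑ r : {w // w ≠ v} → β, ∑ k : β, f ((Equiv.funSplitAt v β).symm (k, r)) := by
  rw [← (Equiv.funSplitAt v β).symm.sum_comp, Fintype.sum_prod_type, Finset.sum_comm]

section Displacement

variable {G E : Type*} [AddCommGroup G] [NormedAddCommGroup E] [NormedSpace ℝ E]
  (T : Multiplicative G →* E ≃ᵃⁱ[ℝ] E)

theorem norm_map_sum_apply_sub_le (x : E) {α : Type*} (s : Finset α) (h : α → G) :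
    ‖T (ofAdd (∑ j ∈ s, h j)) x - x‖ ≤ ∑ j ∈ s, ‖T (ofAdd (h j)) x - x‖ :=
  le_sum_of_subadditive (M := G) (N := ℝ) (fun g => ‖T (ofAdd g) x - x‖) (by simp)
    (fun g g' => by
      simpa only [ofAdd_add, map_mul] using AffineIsometryEquiv.norm_mul_apply_sub_le _ _ x) s h

theorem norm_map_sum_nsmul_apply_sub_le (x : E) {α : Type*} (s : Finset α) (a : α → ℕ)
    (h : α → G) :
    ‖T (ofAdd (∑ j ∈ s, a j • h j)) x - x‖ ≤ ∑ j ∈ s, a j * ‖T (ofAdd (h j)) x - x‖ :=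
  (norm_map_sum_apply_sub_le T x s _).trans <| sum_le_sum fun j _ => by
    simpa [nsmul_eq_mul] using norm_map_sum_apply_sub_le T x (range (a j)) fun _ => h j

variable {ι : Type*} [Fintype ι] [DecidableEq ι]

noncomputable def boxAverage (e : ι → G) (n : ℕ) (ξ : E) : E :=
  (Fintype.card (ι → Fin n) : ℝ)⁻¹ • ∑ c : ι → Fin n, T (ofAdd (∑ i, (c i : ℕ) • e i)) ξ

-- Summing over the `v`-th coordinate first, each line of the box telescopes to its two endpoints.
theorem sum_pi_fin_translate_sub {M : Type*} [AddCommGroup M] (φ : G → M) (e : ι → G)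
    (n : ℕ) (v : ι) :
    ∑ c : ι → Fin n, (φ (e v + ∑ i, (c i : ℕ) • e i) - φ (∑ i, (c i : ℕ) • e i)) =
      ∑ r : {w // w ≠ v} → Fin n,
        (φ (n • e v + ∑ w, (r w : ℕ) • e w) - φ (∑ w, (r w : ℕ) • e w)) := by
  have hw (w : {w // w ≠ v}) : (w : ι) ≠ v := w.2
  rw [Fintype.sum_eq_sum_sum_funSplitAt v]
  refine sum_congr rfl fun r _ => ?_
  simp only [Equiv.funSplitAt_symm_apply, Fintype.sum_eq_add_sum_subtype_ne _ v, dif_pos, hw,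
    dif_neg, not_false_eq_true]
  rw [Fin.sum_univ_eq_sum_range (fun k => φ (e v + (k • e v + _)) - φ (k • e v + _)) n]
  simpa [succ_nsmul', add_assoc] using sum_range_sub (fun k => φ (k • e v + _)) n

theorem map_boxAverage_sub (e : ι → G) (n : ℕ) [NeZero n] (ξ : E) (v : ι) :
    T (ofAdd (e v)) (boxAverage T e n ξ) - boxAverage T e n ξ =
      (Fintype.card (ι → Fin n) : ℝ)⁻¹ • ∑ r : {w // w ≠ v} → Fin n,
        (T (ofAdd (n • e v + ∑ w, (r w : ℕ) • e w)) ξ - T (ofAdd (∑ w, (r w : ℕ) • e w)) ξ) := by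
  rw [← sum_pi_fin_translate_sub (fun g => T (ofAdd g) ξ), sum_sub_distrib, smul_sub, boxAverage]
  simp only [ofAdd_add, map_mul, AffineIsometryEquiv.coe_mul, Function.comp_apply, ← card_univ]
  congr 1
  exact (T (ofAdd (e v))).toAffineEquiv.toAffineMap.map_inv_card_smul_sum univ_nonempty _

theorem norm_map_boxAverage_sub_le (e : ι → G) (n : ℕ) [NeZero n] (ξ : E) (v : ι) :
    ‖T (ofAdd (e v)) (boxAverage T e n ξ) - boxAverage T e n ξ‖ ≤
      ‖T (ofAdd (n • e v)) ξ - ξ‖ / n := by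
  have hterm (g : G) :
      ‖T (ofAdd (n • e v + g)) ξ - T (ofAdd g) ξ‖ = ‖T (ofAdd (n • e v)) ξ - ξ‖ := by
    rw [add_comm, ofAdd_add, map_mul, AffineIsometryEquiv.coe_mul, Function.comp_apply,
      ← dist_eq_norm, AffineIsometryEquiv.dist_map, dist_eq_norm]
  have hcard : Fintype.card (ι → Fin n) = n * Fintype.card ({w // w ≠ v} → Fin n) := by
    rw [Fintype.card_congr (Equiv.funSplitAt v (Fin n)), Fintype.card_prod, Fintype.card_fin]
  have hn : (n : ℝ) ≠ 0 := NeZero.ne _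
  rw [map_boxAverage_sub, norm_smul, norm_inv, Real.norm_natCast]
  calc (Fintype.card (ι → Fin n) : ℝ)⁻¹ * ‖∑ r : {w // w ≠ v} → Fin n,
        (T (ofAdd (n • e v + ∑ w, (r w : ℕ) • e w)) ξ - T (ofAdd (∑ w, (r w : ℕ) • e w)) ξ)‖
      ≤ (Fintype.card (ι → Fin n) : ℝ)⁻¹ *
        ∑ _r : {w // w ≠ v} → Fin n, ‖T (ofAdd (n • e v)) ξ - ξ‖ := by
        gcongr
        exact (norm_sum_le _ _).trans_eq (sum_congr rfl fun r _ => hterm _)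
    _ = ‖T (ofAdd (n • e v)) ξ - ξ‖ / n := by
        rw [sum_const, card_univ, nsmul_eq_mul, hcard, Nat.cast_mul]
        field_simp

theorem norm_map_sum_nsmul_boxAverage_sub_le (e : ι → G) (n : ℕ) [NeZero n] (ξ : E)
    {α : Type*} (s : Finset α) (a : α → ℕ) (v : α → ι) :
    ‖T (ofAdd (∑ j ∈ s, a j • e (v j))) (boxAverage T e n ξ) - boxAverage T e n ξ‖ ≤
      ∑ j ∈ s, a j * ‖T (ofAdd (n • e (v j))) ξ - ξ‖ / n :=
  (norm_map_sum_nsmul_apply_sub_le T _ s a _).trans <| sum_le_sum fun j _ => by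
    rw [mul_div_assoc]
    exact mul_le_mul_of_nonneg_left (norm_map_boxAverage_sub_le T e n ξ (v j)) (Nat.cast_nonneg _)

end Displacement

namespace Heisenberg

variable {R : Type*} [CommRing R]

def zHom : Multiplicative R →* Heisenberg R where
  toFun q := z q.toAdd
  map_one' := rfl
  map_mul' q r := by simp [z, mul_def]

theorem zHom_ofAdd (q : R) : zHom (Multiplicative.ofAdd q) = z q := rfl

end Heisenberg

section Monomials

variable {m d : ℕ}

theorem monOf_eq_monomial (v : DegIdx m d) :
    monOf v = MvPolynomial.monomial (Finsupp.equivFunOnFinite.symm fun i => (v.1 i : ℕ)) 1 := by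
  rw [MvPolynomial.monomial_eq, Finsupp.prod_pow, map_one, one_mul]
  rfl

theorem coeff_sum_C_mul_monOf (f : DegIdx m d → ℤ) (w : DegIdx m d) :
    (∑ v, MvPolynomial.C (f v) * monOf v).coeff
      (Finsupp.equivFunOnFinite.symm fun i => (w.1 i : ℕ)) = f w := by
  simp only [monOf_eq_monomial, MvPolynomial.C_mul_monomial, mul_one, MvPolynomial.coeff_sum,
    MvPolynomial.coeff_monomial]
  rw [Finset.sum_eq_single w (fun v _ hv => if_neg fun h => hv ?_) (by simp), if_pos rfl]
  exact Subtype.ext <| funext fun i => Fin.ext <| DFunLike.congr_fun h i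

theorem sum_C_mul_monOf_injective (k : ℕ) :
    Function.Injective fun c : DegIdx m d → Fin k =>
      ∑ v, MvPolynomial.C ((c v : ℕ) : ℤ) * monOf v := fun c c' h =>
  funext fun w => Fin.ext <| Int.ofNat_inj.mp <| by
    simpa only [coeff_sum_C_mul_monOf] using congrArg (MvPolynomial.coeff
      (Finsupp.equivFunOnFinite.symm fun i => (w.1 i : ℕ))) h

theorem range_monOf : Set.range (monOf (m := m) (d := d)) = BSet m d := by
  ext t
  constructor
  · rintro ⟨v, rfl⟩
    exact ⟨fun i => v.1 i, v.2, rfl⟩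
  · rintro ⟨f, hf, rfl⟩
    have hlt (i : Fin m) : f i < d + 1 :=
      Nat.lt_succ_of_le <| (single_le_sum (fun j _ => Nat.zero_le (f j)) (mem_univ i)).trans hf
    exact ⟨⟨fun i => ⟨f i, hlt i⟩, hf⟩, rfl⟩

theorem le_sSup_BSet (f : MvPolynomial (Fin m) ℤ → ℝ) (w : DegIdx m d) :
    f (monOf w) ≤ sSup {r : ℝ | ∃ t ∈ BSet m d, r = f t} := by
  have hS : {r : ℝ | ∃ t ∈ BSet m d, r = f t} = Set.range (f ∘ monOf (d := d)) := by
    rw [Set.range_comp, range_monOf]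
    ext r
    simp [eq_comm]
  rw [hS]
  exact le_csSup (Set.finite_range _).bddAbove ⟨w, rfl⟩

theorem card_degIdx_le (hm : 1 ≤ m) : (Fintype.card (DegIdx m d) : ℝ) ≤ (d + m) ^ m := by
  have hcard : Fintype.card (DegIdx m d) ≤ (d + 1) ^ m := by
    simpa using Fintype.card_le_of_injective (fun v : DegIdx m d => v.1) Subtype.val_injective
  calc (Fintype.card (DegIdx m d) : ℝ) ≤ ((d + 1 : ℕ) : ℝ) ^ m := by exact_mod_cast hcard
    _ ≤ (d + m) ^ m := by
        gcongr
        push_cast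
        exact_mod_cast Nat.add_le_add_left hm d

def degCast {d₂ : ℕ} (h : d ≤ d₂) (v : DegIdx m d) : DegIdx m d₂ :=
  ⟨fun i => ⟨v.1 i, by have := (v.1 i).isLt; omega⟩, v.2.trans h⟩

theorem monOf_degCast {d₂ : ℕ} (h : d ≤ d₂) (v : DegIdx m d) : monOf (degCast h v) = monOf v :=
  rfl

end Monomials

theorem zAvg_eq_boxAverage {m : ℕ} {E : Type*} [NormedAddCommGroup E] [NormedSpace ℝ E]
    (ρ : Heisenberg (MvPolynomial (Fin m) ℤ) →* (E ≃ᵃⁱ[ℝ] E)) (d₂ : ℕ) (ξ : E) :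
    zAvg ρ d₂ ξ = boxAverage (ρ.comp Heisenberg.zHom) (monOf (d := d₂)) (2 ^ d₂) ξ := by
  rw [zAvg, PolyFinset, card_image_of_injective _ (sum_C_mul_monOf_injective _),
    sum_image fun c _ c' _ h => sum_C_mul_monOf_injective _ h, card_univ, boxAverage]
  simp only [MonoidHom.comp_apply, Heisenberg.zHom_ofAdd, nsmul_eq_mul, map_natCast]

/-- There is a universal constant `C > 0` with the following property.
Fix `m ≥ 1` and let `d, d', d₂ ∈ ℕ` with `d ≤ d₂` and `d' ≤ d₂`.  For every real Banach
space `E`, every affine isometric action `ρ` of `H₃(ℤ[t₁, …, t_m])` on `E`, every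
`ξ ∈ E` and every `p ∈ Poly(d, d')`, writing `η` for the `Poly(d₂,d₂)`-average of the
`ρ(z(q))ξ`, one has
`‖ρ(z(p))η − η‖ ≤ C·(d+m)^m·(1/2)^(d₂−d')·max_{t̲ ∈ B^d} ‖ξ − ρ(z(2^{d₂}·t̲))ξ‖`. -/
theorem z_move_bound :
    ∃ C : ℝ, 0 < C ∧
      ∀ (m : ℕ), 1 ≤ m → ∀ d d' d₂ : ℕ, d ≤ d₂ → d' ≤ d₂ →
        ∀ (E : Type*) [NormedAddCommGroup E] [NormedSpace ℝ E] [CompleteSpace E],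
          ∀ (ρ : Heisenberg (MvPolynomial (Fin m) ℤ) →* (E ≃ᵃⁱ[ℝ] E)) (ξ : E),
            ∀ p ∈ PolyFinset m d d',
              ‖(ρ (Heisenberg.z p)) (zAvg ρ d₂ ξ) - zAvg ρ d₂ ξ‖ ≤
                C * ((d : ℝ) + m) ^ m * (1 / 2 : ℝ) ^ (d₂ - d') *
                  sSup {r : ℝ | ∃ t ∈ BSet m d,
                    r = ‖ξ - (ρ (Heisenberg.z ((2 ^ d₂ : MvPolynomial (Fin m) ℤ) * t))) ξ‖} := by
  refine ⟨1, one_pos, fun m hm d d' d₂ hd hd' E _ _ _ ρ ξ p hp => ?_⟩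
  obtain ⟨a, -, rfl⟩ := mem_image.mp hp
  set M := sSup {r : ℝ | ∃ t ∈ BSet m d,
    r = ‖ξ - (ρ (Heisenberg.z ((2 ^ d₂ : MvPolynomial (Fin m) ℤ) * t))) ξ‖}
  have hM (w : DegIdx m d) :
      ‖ρ (Heisenberg.z ((2 ^ d₂ : ℕ) • monOf w)) ξ - ξ‖ ≤ M := by
    rw [norm_sub_rev, nsmul_eq_mul, Nat.cast_pow, Nat.cast_ofNat]
    exact le_sSup_BSet (fun t => ‖ξ - ρ (Heisenberg.z (2 ^ d₂ * t)) ξ‖) w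
  have hM0 : 0 ≤ M := (norm_nonneg _).trans (hM ⟨0, by simp⟩)
  have hsum : ∑ w, MvPolynomial.C ((a w : ℕ) : ℤ) * monOf w =
      ∑ w, (a w : ℕ) • monOf (degCast hd w) := by
    simp only [monOf_degCast, nsmul_eq_mul, map_natCast]
  have hmove := norm_map_sum_nsmul_boxAverage_sub_le (ρ.comp Heisenberg.zHom) monOf (2 ^ d₂) ξ
    univ (fun w => (a w : ℕ)) (degCast hd)
  simp only [MonoidHom.comp_apply, Heisenberg.zHom_ofAdd, Nat.cast_pow, Nat.cast_ofNat] at hmove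
  rw [zAvg_eq_boxAverage, hsum]
  calc _ ≤ _ := hmove
    _ ≤ ∑ _w : DegIdx m d, (2 : ℝ) ^ d' * M / 2 ^ d₂ := by
        gcongr with w
        · exact_mod_cast (a w).isLt.le
        · exact hM w
    _ = Fintype.card (DegIdx m d) * ((2 : ℝ) ^ d' / 2 ^ d₂) * M := by
        rw [sum_const, card_univ, nsmul_eq_mul]
        ring
    _ ≤ 1 * ((d : ℝ) + m) ^ m * (1 / 2 : ℝ) ^ (d₂ - d') * M := by
        rw [one_mul, one_div, inv_pow, pow_sub₀ _ two_ne_zero hd', mul_inv, inv_inv,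
          ← div_eq_inv_mul]
        gcongr
        exact card_degIdx_le hm
end

section
/- Let δ : (0,2] → (0,1]. There exists r₁ = r₁(δ) ∈ [0,1) such that for every uniformly convex real Banach space E with modulus of convexity at least δ, every integer n ≥ 1, every affine isometric action ρ of H₃(ℤ) on E and every ξ ∈ E: ‖ρ(f)ξ − ρ(f)ζ‖ ≤ max{ r₁·‖ξ − ζ‖ , ‖ξ − ρ(z(2^{n−1}))ξ‖ / 2^{n−1} }, where ζ = (ξ + ρ(z(1))ξ)/2 and ρ(f)ξ denotes the average (1/2^{n+1})·∑_{a∈{0,1}} ∑_{b=0}^{2^n−1} ρ(x(a)·y(b))ξ (and similarly for ρ(f)ζ). -/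
/-- `E` is uniformly convex with modulus of convexity at least `δ`: for every
`ε ∈ (0,2]` and all unit vectors `ξ, η` with `‖ξ − η‖ ≥ ε` one has
`‖(ξ+η)/2‖ ≤ 1 − δ(ε)`. -/
def UCModAtLeast (E : Type*) [NormedAddCommGroup E] [NormedSpace ℝ E]
    (δ : ℝ → ℝ) : Prop :=
  ∀ ε : ℝ, 0 < ε → ε ≤ 2 → ∀ ξ η : E, ‖ξ‖ = 1 → ‖η‖ = 1 → ε ≤ ‖ξ - η‖ →
    ‖(2 : ℝ)⁻¹ • (ξ + η)‖ ≤ 1 - δ ε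

/-- The average `(1/2^{n+1})·∑_{a ∈ {0,1}} ∑_{b=0}^{2^n−1} ρ(x(a)·y(b))ζ`. -/
noncomputable def xyAvg {E : Type*} [NormedAddCommGroup E] [NormedSpace ℝ E]
    (ρ : Heisenberg ℤ →* (E ≃ᵃⁱ[ℝ] E)) (n : ℕ) (ζ : E) : E :=
  ((2 : ℝ) ^ (n + 1))⁻¹ •
    ∑ a ∈ Finset.range 2, ∑ b ∈ Finset.range (2 ^ n),
      (ρ (Heisenberg.x (a : ℤ) * Heisenberg.y (b : ℤ))) ζ


section AuxProof

open Finset Heisenberg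

variable {E : Type*} [NormedAddCommGroup E] [NormedSpace ℝ E]

private lemma aiso_norm_sub (f : E ≃ᵃⁱ[ℝ] E) (p q : E) : ‖f p - f q‖ = ‖p - q‖ := by
  rw [← dist_eq_norm, ← dist_eq_norm]; exact f.dist_map p q

private lemma aiso_norm_sub_sub (f : E ≃ᵃⁱ[ℝ] E) (p q r s : E) :
    ‖(f p - f q) - (f r - f s)‖ = ‖(p - q) - (r - s)‖ := by
  have h1 : f p - f q = f.linearIsometryEquiv (p - q) := by
    rw [← vsub_eq_sub, ← vsub_eq_sub, AffineIsometryEquiv.map_vsub]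
  have h2 : f r - f s = f.linearIsometryEquiv (r - s) := by
    rw [← vsub_eq_sub, ← vsub_eq_sub, AffineIsometryEquiv.map_vsub]
  rw [h1, h2, ← map_sub]
  exact f.linearIsometryEquiv.norm_map _

private lemma aiso_map_half (f : E ≃ᵃⁱ[ℝ] E) (p q : E) :
    f ((2:ℝ)⁻¹ • (p + q)) = (2:ℝ)⁻¹ • (f p + f q) := by
  have h := f.toAffineEquiv.toAffineMap.map_midpoint p q
  simp only [midpoint_eq_smul_add, invOf_eq_inv] at h
  simpa using h

private lemma rho_mul_apply {G : Type*} [Group G] (ρ : G →* (E ≃ᵃⁱ[ℝ] E)) (g h : G) (p : E) :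
    ρ (g * h) p = ρ g (ρ h p) := by rw [map_mul]; rfl

private lemma heis_e1 (b : ℤ) : x (0:ℤ) * y b = y b := by
  simp only [x, y, Heisenberg.mul_def, Heisenberg.mk.injEq]
  exact ⟨by ring, by ring, by ring⟩

private lemma heis_e2 (b : ℤ) : x (0:ℤ) * y b * z 1 = y b * z 1 := by
  simp only [x, y, z, Heisenberg.mul_def, Heisenberg.mk.injEq]
  exact ⟨by ring, by ring, by ring⟩

private lemma heis_e3 (b : ℤ) : x (1:ℤ) * y b = y b * (x 1 * z b) := by
  simp only [x, y, z, Heisenberg.mul_def, Heisenberg.mk.injEq]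
  exact ⟨by ring, by ring, by ring⟩

private lemma heis_e4 (b : ℤ) : x (1:ℤ) * y b * z 1 = y b * (x 1 * z (b + 1)) := by
  simp only [x, y, z, Heisenberg.mul_def, Heisenberg.mk.injEq]
  exact ⟨by ring, by ring, by ring⟩

private lemma heis_e5 (b : ℤ) : x (1:ℤ) * z b * z 1 = x 1 * z (b + 1) := by
  simp only [x, z, Heisenberg.mul_def, Heisenberg.mk.injEq]
  exact ⟨by ring, by ring, by ring⟩

private lemma heis_e6 : x (1:ℤ) * z 0 = x 1 := by
  simp only [x, z, Heisenberg.mul_def, Heisenberg.mk.injEq]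
  exact ⟨by ring, by ring, by ring⟩

set_option maxHeartbeats 2000000 in
private lemma main_aux (δ : ℝ → ℝ) (hδ0 : 0 < δ (1/4)) (hδ1 : δ (1/4) ≤ 1)
    (hUC : UCModAtLeast E δ) (n : ℕ) (hn : 1 ≤ n)
    (ρ : Heisenberg ℤ →* (E ≃ᵃⁱ[ℝ] E)) (ξ : E) :
    ‖xyAvg ρ n ξ - xyAvg ρ n ((2:ℝ)⁻¹ • (ξ + (ρ (Heisenberg.z 1)) ξ))‖ ≤
      max ((1 - δ (1/4) / 16) * ‖ξ - (2:ℝ)⁻¹ • (ξ + (ρ (Heisenberg.z 1)) ξ)‖)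
        (‖ξ - (ρ (Heisenberg.z (2 ^ (n - 1)))) ξ‖ / 2 ^ (n - 1)) := by
  classical
  set r₁ : ℝ := 1 - δ (1/4) / 16 with hr₁
  set ζ : E := (2:ℝ)⁻¹ • (ξ + (ρ (Heisenberg.z 1)) ξ) with hζ
  set v : E := ξ - (ρ (Heisenberg.z 1)) ξ with hv
  set w : Heisenberg ℤ → E := fun g => ρ g ξ - ρ (g * Heisenberg.z 1) ξ with hw
  clear_value r₁ ζ v w
  have hwnorm : ∀ g, ‖w g‖ = ‖v‖ := by
    intro g
    simp only [hw]
    rw [rho_mul_apply, aiso_norm_sub, hv]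
  have hterm : ∀ g : Heisenberg ℤ, ρ g ξ - ρ g ζ = (2:ℝ)⁻¹ • w g := by
    intro g
    rw [hζ, aiso_map_half]
    simp only [hw]
    rw [rho_mul_apply]
    module
  have hD : xyAvg ρ n ξ - xyAvg ρ n ζ
      = ((2:ℝ) ^ (n + 2))⁻¹ • ∑ b ∈ Finset.range (2 ^ n),
          (w (x 0 * y (b:ℤ)) + w (x 1 * y (b:ℤ))) := by
    unfold xyAvg
    rw [← smul_sub, ← Finset.sum_sub_distrib]
    simp_rw [← Finset.sum_sub_distrib, hterm, ← Finset.smul_sum]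
    rw [smul_smul, Finset.sum_range_succ, Finset.sum_range_one, ← Finset.sum_add_distrib]
    congr 1
    rw [← mul_inv, ← pow_succ]
  set M : E := ∑ b ∈ Finset.range (2 ^ n),
      (w (x 0 * y (b:ℤ)) + w (x 1 * y (b:ℤ))) with hM
  clear_value M
  have hPpos : (0:ℝ) < 2 ^ n := by positivity
  have hpow : (2:ℝ) ^ (n + 2) = 2 ^ n * 4 := by rw [pow_add]; norm_num
  have hnormD : ‖xyAvg ρ n ξ - xyAvg ρ n ζ‖ = ((2:ℝ) ^ n * 4)⁻¹ * ‖M‖ := by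
    rw [hD, norm_smul, Real.norm_eq_abs, abs_of_pos (by positivity), hpow]
  have hMle : ‖M‖ ≤ 2 ^ n * (2 * ‖v‖) := by
    rw [hM]
    refine le_trans (norm_sum_le _ _) ?_
    have hb : ∀ b ∈ Finset.range (2 ^ n),
        ‖w (x 0 * y (b:ℤ)) + w (x 1 * y (b:ℤ))‖ ≤ 2 * ‖v‖ := by
      intro b _
      refine le_trans (norm_add_le _ _) ?_
      rw [hwnorm, hwnorm]; linarith
    refine le_trans (Finset.sum_le_sum hb) ?_
    rw [Finset.sum_const, Finset.card_range, nsmul_eq_mul]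
    push_cast
    exact le_refl _
  have hDle : ‖xyAvg ρ n ξ - xyAvg ρ n ζ‖ ≤ ‖v‖ / 2 := by
    rw [hnormD]
    have h1 : ((2:ℝ)^n * 4)⁻¹ * ‖M‖ ≤ ((2:ℝ)^n * 4)⁻¹ * (2^n * (2 * ‖v‖)) := by
      gcongr
    refine h1.trans ?_
    rw [show ((2:ℝ)^n*4)⁻¹ * ((2:ℝ)^n*(2*‖v‖)) = ((2:ℝ)^n * ((2:ℝ)^n)⁻¹) * (‖v‖/2) by ring,
      mul_inv_cancel₀ hPpos.ne', one_mul]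
  rcases le_or_gt (‖xyAvg ρ n ξ - xyAvg ρ n ζ‖) (r₁ * ‖ξ - ζ‖) with hcase | hcase
  · exact hcase.trans (le_max_left _ _)
  have hnξζ : ‖ξ - ζ‖ = ‖v‖ / 2 := by
    have h : ξ - ζ = (2:ℝ)⁻¹ • v := by rw [hζ, hv]; module
    rw [h, norm_smul, Real.norm_eq_abs, abs_of_pos (by norm_num : (0:ℝ) < 2⁻¹)]
    ring
  have hvpos : (0:ℝ) < ‖v‖ := by
    rcases eq_or_lt_of_le (norm_nonneg v) with h | h
    · exfalso
      rw [hnξζ, ← h] at hcase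
      rw [← h] at hDle
      nlinarith [norm_nonneg (xyAvg ρ n ξ - xyAvg ρ n ζ)]
    · exact h
  set F : Finset ℕ := (Finset.range (2^n)).filter
      (fun b : ℕ => ‖v‖/4 ≤ ‖w (x 0 * y (b:ℤ)) - w (x 1 * y (b:ℤ))‖) with hF
  clear_value F
  have hfarbound : ∀ b : ℕ, ‖v‖/4 ≤ ‖w (x 0 * y (b:ℤ)) - w (x 1 * y (b:ℤ))‖ →
      ‖w (x 0 * y (b:ℤ)) + w (x 1 * y (b:ℤ))‖ ≤ 2 * ‖v‖ * (1 - δ (1/4)) := by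
    intro b hb
    have hn0 : ‖(‖v‖⁻¹ • w (x 0 * y (b:ℤ)))‖ = 1 := by
      rw [norm_smul, Real.norm_eq_abs, abs_of_pos (inv_pos.2 hvpos), hwnorm,
        inv_mul_cancel₀ hvpos.ne']
    have hn1 : ‖(‖v‖⁻¹ • w (x 1 * y (b:ℤ)))‖ = 1 := by
      rw [norm_smul, Real.norm_eq_abs, abs_of_pos (inv_pos.2 hvpos), hwnorm,
        inv_mul_cancel₀ hvpos.ne']
    have hsep : (1/4 : ℝ) ≤ ‖‖v‖⁻¹ • w (x 0 * y (b:ℤ)) - ‖v‖⁻¹ • w (x 1 * y (b:ℤ))‖ := by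
      rw [← smul_sub, norm_smul, Real.norm_eq_abs, abs_of_pos (inv_pos.2 hvpos)]
      calc (1/4:ℝ) = ‖v‖⁻¹ * (‖v‖/4) := by field_simp
        _ ≤ ‖v‖⁻¹ * ‖w (x 0 * y (b:ℤ)) - w (x 1 * y (b:ℤ))‖ := by gcongr
    have huc := hUC (1/4) (by norm_num) (by norm_num) _ _ hn0 hn1 hsep
    have heq : ‖(2:ℝ)⁻¹ • (‖v‖⁻¹ • w (x 0 * y (b:ℤ)) + ‖v‖⁻¹ • w (x 1 * y (b:ℤ)))‖
        = (2 * ‖v‖)⁻¹ * ‖w (x 0 * y (b:ℤ)) + w (x 1 * y (b:ℤ))‖ := by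
      rw [← smul_add, smul_smul, norm_smul, Real.norm_eq_abs, abs_of_pos (by positivity),
        mul_inv]
    rw [heq] at huc
    have h2 := mul_le_mul_of_nonneg_left huc (by positivity : (0:ℝ) ≤ 2 * ‖v‖)
    rwa [← mul_assoc, mul_inv_cancel₀ (by positivity : (2*‖v‖:ℝ) ≠ 0), one_mul] at h2
  have hMle2 : ‖M‖ ≤ 2^n * (2*‖v‖) - F.card * (2*‖v‖*δ (1/4)) := by
    rw [hM]
    calc ‖∑ b ∈ Finset.range (2^n), (w (x 0 * y (b:ℤ)) + w (x 1 * y (b:ℤ)))‖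
        ≤ ∑ b ∈ Finset.range (2^n), ‖w (x 0 * y (b:ℤ)) + w (x 1 * y (b:ℤ))‖ :=
          norm_sum_le _ _
      _ ≤ ∑ b ∈ Finset.range (2^n), (2*‖v‖ -
            if ‖v‖/4 ≤ ‖w (x 0 * y (b:ℤ)) - w (x 1 * y (b:ℤ))‖
              then 2*‖v‖*δ (1/4) else 0) := by
          refine Finset.sum_le_sum ?_
          intro b _
          by_cases hb : ‖v‖/4 ≤ ‖w (x 0 * y (b:ℤ)) - w (x 1 * y (b:ℤ))‖
          · rw [if_pos hb]
            have := hfarbound b hb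
            nlinarith
          · rw [if_neg hb]
            have h3 := norm_add_le (w (x 0 * y (b:ℤ))) (w (x 1 * y (b:ℤ)))
            rw [hwnorm, hwnorm] at h3
            linarith
      _ = 2^n * (2*‖v‖) - F.card * (2*‖v‖*δ (1/4)) := by
          rw [Finset.sum_sub_distrib, Finset.sum_const, Finset.card_range,
            ← Finset.sum_filter, Finset.sum_const, ← hF, nsmul_eq_mul, nsmul_eq_mul]
          push_cast
          ring
  rw [hnormD, hnξζ, inv_mul_eq_div, lt_div_iff₀ (by positivity : (0:ℝ) < 2^n*4)] at hcase
  rw [hr₁] at hcase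
  have hδv : (0:ℝ) < ‖v‖ * δ (1/4) := mul_pos hvpos hδ0
  have hFcard : (F.card : ℝ) < 2^n / 16 := by
    nlinarith [hMle2, hcase, hδv, hPpos]
  -- second branch of the max
  refine le_trans ?_ (le_max_right _ _)
  set C : ℕ := 2^(n-1) with hC
  clear_value C
  have hCcast : ((C:ℕ):ℝ) = (2:ℝ)^(n-1) := by rw [hC]; push_cast; ring
  have hCpos : (0:ℝ) < (2:ℝ)^(n-1) := by positivity
  have hNC : (2:ℝ)^n = 2 * 2^(n-1) := by
    conv_lhs => rw [← Nat.sub_add_cancel hn]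
    rw [pow_succ]
    ring
  set qq : ℕ → E := fun b => (ρ (x 1 * z (b:ℤ))) ξ - (ρ (x 1 * z ((b:ℤ)+1))) ξ with hqq
  clear_value qq
  have hqnorm : ∀ b : ℕ, ‖qq b‖ = ‖v‖ := by
    intro b
    have h := hwnorm (x 1 * z (b:ℤ))
    simp only [hw] at h
    rw [heis_e5 (b:ℤ)] at h
    simpa only [hqq] using h
  have hdiffeq : ∀ b : ℕ, ‖w (x 0 * y (b:ℤ)) - w (x 1 * y (b:ℤ))‖ = ‖v - qq b‖ := by
    intro b
    simp only [hw, hqq]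
    rw [heis_e2 (b:ℤ), heis_e4 (b:ℤ), heis_e1 (b:ℤ), heis_e3 (b:ℤ)]
    rw [rho_mul_apply ρ (y (b:ℤ)) (z 1) ξ, rho_mul_apply ρ (y (b:ℤ)) (x 1 * z (b:ℤ)) ξ,
      rho_mul_apply ρ (y (b:ℤ)) (x 1 * z ((b:ℤ)+1)) ξ]
    rw [aiso_norm_sub_sub, hv]
  have htel : ∑ b ∈ Finset.range C, qq b = (ρ (x 1)) ξ - (ρ (x 1 * z (C:ℤ))) ξ := by
    have key := Finset.sum_range_sub' (fun i : ℕ => (ρ (x 1 * z (i:ℤ))) ξ) C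
    have hcongr : ∑ b ∈ Finset.range C, qq b
        = ∑ b ∈ Finset.range C, ((fun i : ℕ => (ρ (x 1 * z (i:ℤ))) ξ) b
            - (fun i : ℕ => (ρ (x 1 * z (i:ℤ))) ξ) (b+1)) := by
      refine Finset.sum_congr rfl ?_
      intro b _
      simp only [hqq]
      push_cast
      rfl
    rw [hcongr, key]
    congr 2
  have hsumq : ‖∑ b ∈ Finset.range C, qq b‖ = ‖ξ - (ρ (z (C:ℤ))) ξ‖ := by
    rw [htel, rho_mul_apply, aiso_norm_sub]
  have htri : (C:ℝ) * ‖v‖ - ∑ b ∈ Finset.range C, ‖v - qq b‖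
      ≤ ‖∑ b ∈ Finset.range C, qq b‖ := by
    have h1 : ∑ b ∈ Finset.range C, qq b
        = ((C:ℝ) • v) - ∑ b ∈ Finset.range C, (v - qq b) := by
      rw [Finset.sum_sub_distrib, Finset.sum_const, Finset.card_range,
        ← Nat.cast_smul_eq_nsmul ℝ]
      abel
    have h2 := norm_sub_norm_le ((C:ℝ) • v) (∑ b ∈ Finset.range C, (v - qq b))
    have h3 : ‖(C:ℝ) • v‖ = (C:ℝ) * ‖v‖ := by
      rw [norm_smul, Real.norm_natCast]
    have h4 := norm_sum_le (Finset.range C) (fun b => v - qq b)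
    rw [h1]
    calc (C:ℝ) * ‖v‖ - ∑ b ∈ Finset.range C, ‖v - qq b‖
        ≤ ‖(C:ℝ) • v‖ - ‖∑ b ∈ Finset.range C, (v - qq b)‖ := by rw [h3]; linarith
      _ ≤ _ := h2
  have hsub : (Finset.range C).filter
        (fun b : ℕ => ‖v‖/4 ≤ ‖w (x 0 * y (b:ℤ)) - w (x 1 * y (b:ℤ))‖) ⊆ F := by
    rw [hF]
    refine Finset.filter_subset_filter _ (Finset.range_subset_range.2 ?_)
    rw [hC]
    exact Nat.pow_le_pow_right (by norm_num : 0 < 2) (Nat.sub_le n 1)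
  have hsumbound : ∑ b ∈ Finset.range C, ‖v - qq b‖
      ≤ (C:ℝ) * (‖v‖/4) + F.card * (2*‖v‖) := by
    calc ∑ b ∈ Finset.range C, ‖v - qq b‖
        ≤ ∑ b ∈ Finset.range C, (‖v‖/4 +
            if ‖v‖/4 ≤ ‖w (x 0 * y (b:ℤ)) - w (x 1 * y (b:ℤ))‖ then 2*‖v‖ else 0) := by
          refine Finset.sum_le_sum ?_
          intro b _
          by_cases hb : ‖v‖/4 ≤ ‖w (x 0 * y (b:ℤ)) - w (x 1 * y (b:ℤ))‖
          · rw [if_pos hb]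
            have h5 := norm_sub_le v (qq b)
            rw [hqnorm b] at h5
            have := norm_nonneg v
            linarith
          · rw [if_neg hb]
            push_neg at hb
            rw [hdiffeq b] at hb
            linarith
      _ = (C:ℝ) * (‖v‖/4) + ((Finset.range C).filter
            (fun b : ℕ => ‖v‖/4 ≤ ‖w (x 0 * y (b:ℤ)) - w (x 1 * y (b:ℤ))‖)).card * (2*‖v‖) := by
          rw [Finset.sum_add_distrib, Finset.sum_const, Finset.card_range,
            ← Finset.sum_filter, Finset.sum_const, nsmul_eq_mul, nsmul_eq_mul]
      _ ≤ _ := by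
          have hcard := Finset.card_le_card hsub
          gcongr
  have hzcast : Heisenberg.z ((C:ℕ):ℤ) = Heisenberg.z ((2:ℤ) ^ (n-1)) := by
    rw [hC]; push_cast; rfl
  have hZbig : (2:ℝ)^(n-1) * (‖v‖/2) ≤ ‖ξ - (ρ (Heisenberg.z ((2:ℤ)^(n-1)))) ξ‖ := by
    rw [← hzcast, ← hsumq]
    have hFv : (F.card:ℝ) * (2*‖v‖) ≤ ((2:ℝ)^n/16) * (2*‖v‖) := by
      have := le_of_lt hFcard
      gcongr
    calc (2:ℝ)^(n-1) * (‖v‖/2)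
        ≤ (C:ℝ) * ‖v‖ - ((C:ℝ) * (‖v‖/4) + F.card * (2*‖v‖)) := by
          rw [hCcast]
          rw [hNC] at hFv
          nlinarith [hvpos]
      _ ≤ (C:ℝ) * ‖v‖ - ∑ b ∈ Finset.range C, ‖v - qq b‖ := by linarith
      _ ≤ _ := htri
  rw [le_div_iff₀ hCpos]
  calc ‖xyAvg ρ n ξ - xyAvg ρ n ζ‖ * (2:ℝ)^(n-1) ≤ (‖v‖/2) * (2:ℝ)^(n-1) := by
        gcongr
    _ = (2:ℝ)^(n-1) * (‖v‖/2) := by ring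
    _ ≤ _ := hZbig

end AuxProof

/-- Let `δ : (0,2] → (0,1]`.  There exists `r₁ = r₁(δ) ∈ [0,1)` such
that for every uniformly convex real Banach space `E` with modulus of convexity at
least `δ`, every integer `n ≥ 1`, every affine isometric action `ρ` of `H₃(ℤ)` on `E`
and every `ξ ∈ E`:
`‖ρ(f)ξ − ρ(f)ζ‖ ≤ max{ r₁·‖ξ − ζ‖ , ‖ξ − ρ(z(2^{n−1}))ξ‖ / 2^{n−1} }`,
where `ζ = (ξ + ρ(z(1))ξ)/2` and `ρ(f)ξ` denotes the average
`(1/2^{n+1})·∑_{a ∈ {0,1}} ∑_{b=0}^{2^n−1} ρ(x(a)·y(b))ξ`. -/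
theorem averaged_contraction :
    ∀ δ : ℝ → ℝ, (∀ ε, 0 < ε → ε ≤ 2 → 0 < δ ε ∧ δ ε ≤ 1) →
      ∃ r₁ : ℝ, 0 ≤ r₁ ∧ r₁ < 1 ∧
        ∀ (E : Type*) [NormedAddCommGroup E] [NormedSpace ℝ E] [CompleteSpace E],
          UCModAtLeast E δ →
          ∀ n : ℕ, 1 ≤ n →
            ∀ (ρ : Heisenberg ℤ →* (E ≃ᵃⁱ[ℝ] E)) (ξ : E),
              ‖xyAvg ρ n ξ - xyAvg ρ n ((2 : ℝ)⁻¹ • (ξ + (ρ (Heisenberg.z 1)) ξ))‖ ≤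
                max (r₁ * ‖ξ - (2 : ℝ)⁻¹ • (ξ + (ρ (Heisenberg.z 1)) ξ)‖)
                  (‖ξ - (ρ (Heisenberg.z (2 ^ (n - 1)))) ξ‖ / 2 ^ (n - 1)) := by
  intro δ hδ
  obtain ⟨hδ0, hδ1⟩ := hδ (1/4) (by norm_num) (by norm_num)
  refine ⟨1 - δ (1/4) / 16, by linarith, by linarith, ?_⟩
  intro E _ _ _ hUC n hn ρ ξ
  exact main_aux δ hδ0 hδ1 hUC n hn ρ ξ
end

section
/- Fix m ≥ 1 and let S = { x_{i,j}(±1), x_{i,j}(±t₁), ..., x_{i,j}(±t_m) : 1 ≤ i,j ≤ 3, i ≠ j } ⊆ St_{A₂}(ℤ[t₁,...,t_m]). There is a universal constant C > 0 such that for all 1 ≤ i,j ≤ 3 with i ≠ j: (i) for every d ∈ ℕ ∪ {0} and every monomial t̲ in ℤ[t₁,...,t_m], |x_{i,j}(2^d·t̲)|_S ≤ C·(1 + (d + deg(t̲))²); and (ii) for every a ∈ ℤ∖{0} and every monomial t̲, |x_{i,j}(a·t̲)|_S ≤ C·(1 + (log₂|a|)³ + (deg(t̲))²). -/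
/-- Generators of the Steinberg group `St_{A₂}(R)`: one generator `x_{i,j}(p)` for each
pair `i ≠ j` in `{1,2,3}` and each `p ∈ R`. -/
def SteinbergGen (R : Type*) : Type _ := { q : Fin 3 × Fin 3 // q.1 ≠ q.2 } × R

/-- The free generator corresponding to `x_{i,j}(p)`. -/
def fgen {R : Type*} (i j : Fin 3) (h : i ≠ j) (p : R) : FreeGroup (SteinbergGen R) :=
  FreeGroup.of (⟨⟨(i, j), h⟩, p⟩ : SteinbergGen R)

open scoped commutatorElement

/-- The defining relations of the Steinberg group `St_{A₂}(R)`: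
additivity in each root subgroup, the commutator relation
`[x_{i,j}(p), x_{j,k}(q)] = x_{i,k}(pq)`, and triviality of the commutators
`[x_{i,j}(p), x_{i,k}(q)]` and `[x_{j,i}(p), x_{k,i}(q)]`. -/
def steinbergRels (R : Type*) [CommRing R] : Set (FreeGroup (SteinbergGen R)) :=
  { w | ∃ (i j : Fin 3) (h : i ≠ j) (p q : R),
      w = fgen i j h p * fgen i j h q * (fgen i j h (p + q))⁻¹ } ∪
  { w | ∃ (i j k : Fin 3) (hij : i ≠ j) (hjk : j ≠ k) (hik : i ≠ k) (p q : R),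
      w = ⁅fgen i j hij p, fgen j k hjk q⁆ * (fgen i k hik (p * q))⁻¹ } ∪
  { w | ∃ (i j k : Fin 3) (hij : i ≠ j) (hik : i ≠ k) (hjk : j ≠ k) (p q : R),
      w = ⁅fgen i j hij p, fgen i k hik q⁆ } ∪
  { w | ∃ (i j k : Fin 3) (hji : j ≠ i) (hki : k ≠ i) (hjk : j ≠ k) (p q : R),
      w = ⁅fgen j i hji p, fgen k i hki q⁆ }

/-- The Steinberg group `St_{A₂}(R)`, presented by the generators `x_{i,j}(p)` subject
to the Steinberg relations. -/
def SteinbergA2 (R : Type*) [CommRing R] : Type _ := PresentedGroup (steinbergRels R)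

instance (R : Type*) [CommRing R] : Group (SteinbergA2 R) :=
  inferInstanceAs (Group (PresentedGroup (steinbergRels R)))

/-- The generator `x_{i,j}(p)` of the Steinberg group `St_{A₂}(R)`. -/
def stx {R : Type*} [CommRing R] (i j : Fin 3) (h : i ≠ j) (p : R) : SteinbergA2 R :=
  PresentedGroup.of (⟨⟨(i, j), h⟩, p⟩ : SteinbergGen R)

/-- The word length of `g` with respect to a generating set `S`: the least `n` such that
`g` is a product of `n` elements of `S`. -/
noncomputable def wordLength {Γ : Type*} [Group Γ] (S : Set Γ) (g : Γ) : ℕ :=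
  sInf { n | ∃ l : List Γ, l.length = n ∧ (∀ s ∈ l, s ∈ S) ∧ l.prod = g }

/-- The generating set
`S = { x_{i,j}(±1), x_{i,j}(±t₁), …, x_{i,j}(±t_m) : 1 ≤ i,j ≤ 3, i ≠ j }`
of `St_{A₂}(ℤ[t₁,…,t_m])`. -/
def stdGens (m : ℕ) : Set (SteinbergA2 (MvPolynomial (Fin m) ℤ)) :=
  { g | ∃ (i j : Fin 3) (h : i ≠ j) (p : MvPolynomial (Fin m) ℤ),
      (p = 1 ∨ p = -1 ∨ ∃ l : Fin m, p = MvPolynomial.X l ∨ p = -MvPolynomial.X l) ∧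
      g = stx i j h p }

/-!
Commutators multiply entries, `x_{i,j}(pq) = [x_{i,k}(p), x_{k,j}(q)]`, and a commutator costs at
most twice the sum of the lengths of its entries. Splitting a product of `n` factors `2` and `tₗ`
recursively into halves therefore writes `x_{i,j}(2^d t̲)` as a word of length
`O(4^{log₂ n}) = O(n²)`, where `n = d + deg t̲`. Since `|a|` is a sum of at most `log₂|a| + 1`
powers of two, each of cost `O(log²|a|)`, and `x_{i,j}(a t̲) = [x_{i,k}(a), x_{k,j}(t̲)]`, the
cubic bound follows.
-/

section Relations

variable {R : Type*} [CommRing R]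

theorem stx_add (i j : Fin 3) (h : i ≠ j) (p q : R) :
    stx i j h (p + q) = stx i j h p * stx i j h q :=
  (PresentedGroup.mk_eq_mk_of_mul_inv_mem (Or.inl (Or.inl (Or.inl ⟨i, j, h, p, q, rfl⟩)))).symm

theorem stx_zero (i j : Fin 3) (h : i ≠ j) : stx i j h (0 : R) = 1 := by
  simpa using stx_add i j h (0 : R) 0

theorem stx_neg (i j : Fin 3) (h : i ≠ j) (p : R) : stx i j h (-p) = (stx i j h p)⁻¹ :=
  eq_inv_of_mul_eq_one_left <| by rw [← stx_add, neg_add_cancel, stx_zero]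

theorem stx_mul_eq_commutatorElement (i k j : Fin 3) (hik : i ≠ k) (hkj : k ≠ j) (hij : i ≠ j)
    (p q : R) : stx i j hij (p * q) = ⁅stx i k hik p, stx k j hkj q⁆ := by
  have hr : ⁅fgen i k hik p, fgen k j hkj q⁆ * (fgen i j hij (p * q))⁻¹ ∈ steinbergRels R :=
    Or.inl (Or.inl (Or.inr ⟨i, k, j, hik, hkj, hij, p, q, rfl⟩))
  have hmk := PresentedGroup.mk_eq_mk_of_mul_inv_mem hr
  rw [map_commutatorElement] at hmk
  exact hmk.symm

theorem Fin.exists_ne_and_ne (i j : Fin 3) : ∃ k, i ≠ k ∧ k ≠ j := by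
  revert i j; decide

end Relations

section WordLength

variable {Γ : Type*} [Group Γ] {S : Set Γ} {g g' : Γ} {n n' : ℕ}

variable (S) in
def WordLengthLE (g : Γ) (n : ℕ) : Prop :=
  ∃ l : List Γ, l.length ≤ n ∧ (∀ s ∈ l, s ∈ S) ∧ l.prod = g

namespace WordLengthLE

theorem wordLength_le (hg : WordLengthLE S g n) : wordLength S g ≤ n := by
  obtain ⟨l, hlen, hS, rfl⟩ := hg
  exact le_trans (Nat.sInf_le ⟨l, rfl, hS, rfl⟩) hlen

theorem mono (hg : WordLengthLE S g n) (hn : n ≤ n') : WordLengthLE S g n' := by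
  obtain ⟨l, hlen, hS, rfl⟩ := hg
  exact ⟨l, hlen.trans hn, hS, rfl⟩

theorem one : WordLengthLE S 1 n :=
  ⟨[], Nat.zero_le n, by simp, rfl⟩

theorem of_mem (hg : g ∈ S) : WordLengthLE S g 1 :=
  ⟨[g], le_rfl, by simpa using hg, List.prod_singleton⟩

theorem mul (hg : WordLengthLE S g n) (hg' : WordLengthLE S g' n') :
    WordLengthLE S (g * g') (n + n') := by
  obtain ⟨l, hlen, hS, rfl⟩ := hg
  obtain ⟨l', hlen', hS', rfl⟩ := hg'
  refine ⟨l ++ l', by simp only [List.length_append]; omega, ?_, List.prod_append⟩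
  simpa only [List.mem_append, or_imp, forall_and] using ⟨hS, hS'⟩

theorem inv (hS : ∀ s ∈ S, s⁻¹ ∈ S) (hg : WordLengthLE S g n) : WordLengthLE S g⁻¹ n := by
  obtain ⟨l, hlen, hl, rfl⟩ := hg
  refine ⟨(l.map (·⁻¹)).reverse, by simpa using hlen, ?_, List.prod_inv_reverse l |>.symm⟩
  simpa using fun s hs => inv_inv s ▸ hS _ (hl _ hs)

theorem commutatorElement (hS : ∀ s ∈ S, s⁻¹ ∈ S) (hg : WordLengthLE S g n)
    (hg' : WordLengthLE S g' n') : WordLengthLE S ⁅g, g'⁆ (2 * n + 2 * n') := by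
  rw [commutatorElement_def]
  exact (((hg.mul hg').mul (hg.inv hS)).mul (hg'.inv hS)).mono (by omega)

end WordLengthLE

end WordLength

theorem Nat.four_pow_log_two_succ_le (n : ℕ) : 4 ^ (Nat.log 2 n + 1) ≤ 4 * (1 + n ^ 2) := by
  have h4 : 4 ^ (Nat.log 2 n + 1) = 4 * (2 ^ Nat.log 2 n) ^ 2 := by
    rw [← pow_mul, mul_comm _ 2, pow_mul]; norm_num [pow_succ, mul_comm]
  rcases eq_or_ne n 0 with rfl | hn
  · simp
  · have := Nat.pow_le_pow_left (Nat.pow_log_le_self 2 hn) 2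
    omega

section Halving

variable {R : Type*} [CommRing R] {S : Set (SteinbergA2 R)} {A : ℕ}

theorem wordLengthLE_stx_list_prod_of_length_le_two_pow (hS : ∀ s ∈ S, s⁻¹ ∈ S)
    (h1 : ∀ i j (h : i ≠ j), WordLengthLE S (stx i j h 1) A) {c : ℕ} {L : List R}
    (hL : ∀ p ∈ L, ∀ i j (h : i ≠ j), WordLengthLE S (stx i j h p) A) (hlen : L.length ≤ 2 ^ c)
    (i j : Fin 3) (h : i ≠ j) : WordLengthLE S (stx i j h L.prod) (A * 4 ^ c) := by
  induction c generalizing L i j with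
  | zero =>
    rcases L with _ | ⟨p, _ | _⟩
    · simpa using h1 i j h
    · simpa using hL p (by simp) i j h
    · simp at hlen
  | succ c ih =>
    obtain ⟨k, hik, hkj⟩ := Fin.exists_ne_and_ne i j
    rw [← L.prod_take_mul_prod_drop (L.length / 2), stx_mul_eq_commutatorElement i k j hik hkj h]
    have hfront := ih (L := L.take (L.length / 2)) (fun p hp => hL p (List.mem_of_mem_take hp))
      (by rw [List.length_take, pow_succ] at *; omega) i k hik
    have hback := ih (L := L.drop (L.length / 2)) (fun p hp => hL p (List.mem_of_mem_drop hp))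
      (by rw [List.length_drop, pow_succ] at *; omega) k j hkj
    exact (hfront.commutatorElement hS hback).mono (le_of_eq (by ring))

theorem wordLengthLE_stx_list_prod (hS : ∀ s ∈ S, s⁻¹ ∈ S)
    (h1 : ∀ i j (h : i ≠ j), WordLengthLE S (stx i j h 1) A) {L : List R}
    (hL : ∀ p ∈ L, ∀ i j (h : i ≠ j), WordLengthLE S (stx i j h p) A) (i j : Fin 3) (h : i ≠ j) :
    WordLengthLE S (stx i j h L.prod) (4 * A * (1 + L.length ^ 2)) :=
  (wordLengthLE_stx_list_prod_of_length_le_two_pow hS h1 hL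
      (Nat.lt_pow_succ_log_self one_lt_two _).le i j h).mono <| by
    rw [mul_assoc, mul_left_comm]
    exact Nat.mul_le_mul_left A (Nat.four_pow_log_two_succ_le _)

end Halving

section BinaryExpansion

variable {R : Type*} [CommRing R] {S : Set (SteinbergA2 R)} {B K : ℕ}

theorem wordLengthLE_stx_natCast_of_lt_two_pow (i j : Fin 3) (h : i ≠ j)
    (hpow : ∀ e < K, WordLengthLE S (stx i j h (2 ^ e : R)) B) {a : ℕ} (ha : a < 2 ^ K) :
    WordLengthLE S (stx i j h (a : R)) (K * B) := by
  induction K generalizing a with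
  | zero =>
    obtain rfl : a = 0 := by simpa using ha
    simpa [stx_zero] using WordLengthLE.one
  | succ K ih =>
    have ih' := fun {a} => ih (fun e he => hpow e (he.trans K.lt_succ_self)) (a := a)
    rcases lt_or_ge a (2 ^ K) with ha' | ha'
    · exact (ih' ha').mono (Nat.mul_le_mul_right B K.le_succ)
    · have hrest : a - 2 ^ K < 2 ^ K := by rw [pow_succ] at ha; omega
      rw [← Nat.sub_add_cancel ha', Nat.cast_add, Nat.cast_pow, Nat.cast_ofNat, stx_add,
        Nat.succ_mul]
      exact (ih' hrest).mul (hpow K K.lt_succ_self)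

theorem wordLengthLE_stx_intCast_of_natAbs_lt_two_pow (hS : ∀ s ∈ S, s⁻¹ ∈ S) (i j : Fin 3)
    (h : i ≠ j) (hpow : ∀ e < K, WordLengthLE S (stx i j h (2 ^ e : R)) B) {a : ℤ}
    (ha : a.natAbs < 2 ^ K) : WordLengthLE S (stx i j h (a : R)) (K * B) := by
  have hnat := wordLengthLE_stx_natCast_of_lt_two_pow i j h hpow ha
  rcases Int.natAbs_eq a with hpos | hneg
  · rwa [hpos, Int.cast_natCast]
  · rw [hneg, Int.cast_neg, Int.cast_natCast, stx_neg]
    exact hnat.inv hS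

end BinaryExpansion

section Polynomial

open MvPolynomial

noncomputable def monomialFactors {R : Type*} [CommSemiring R] {m : ℕ} (v : Fin m → ℕ) :
    List (MvPolynomial (Fin m) R) :=
  (List.finRange m).flatMap fun l => List.replicate (v l) (X l)

theorem prod_monomialFactors {R : Type*} [CommSemiring R] {m : ℕ} (v : Fin m → ℕ) :
    (monomialFactors v : List (MvPolynomial (Fin m) R)).prod = ∏ l, X l ^ v l := by
  simp [monomialFactors, List.flatMap, List.prod_flatten, Fin.prod_univ_def, Function.comp_def]

theorem length_monomialFactors {R : Type*} [CommSemiring R] {m : ℕ} (v : Fin m → ℕ) :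
    (monomialFactors v : List (MvPolynomial (Fin m) R)).length = ∑ l, v l := by
  simp [monomialFactors, List.length_flatMap, Fin.sum_univ_def]

variable {m : ℕ}

theorem stdGens_inv_mem : ∀ g ∈ stdGens m, g⁻¹ ∈ stdGens m := by
  rintro _ ⟨i, j, h, p, hp, rfl⟩
  refine ⟨i, j, h, -p, ?_, (stx_neg i j h p).symm⟩
  rcases hp with rfl | rfl | ⟨l, rfl | rfl⟩
  · exact Or.inr (Or.inl rfl)
  · exact Or.inl (neg_neg 1)
  · exact Or.inr (Or.inr ⟨l, Or.inr rfl⟩)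
  · exact Or.inr (Or.inr ⟨l, Or.inl (neg_neg _)⟩)

theorem wordLengthLE_stx_one (i j : Fin 3) (h : i ≠ j) :
    WordLengthLE (stdGens m) (stx i j h 1) 1 :=
  .of_mem ⟨i, j, h, 1, Or.inl rfl, rfl⟩

theorem wordLengthLE_stx_X (i j : Fin 3) (h : i ≠ j) (l : Fin m) :
    WordLengthLE (stdGens m) (stx i j h (X l)) 1 :=
  .of_mem ⟨i, j, h, X l, Or.inr (Or.inr ⟨l, Or.inl rfl⟩), rfl⟩

theorem wordLengthLE_stx_two (i j : Fin 3) (h : i ≠ j) :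
    WordLengthLE (stdGens m) (stx i j h 2) 2 := by
  rw [← one_add_one_eq_two, stx_add]
  exact (wordLengthLE_stx_one i j h).mul (wordLengthLE_stx_one i j h)

theorem wordLengthLE_stx_two_pow_mul_monomial (d : ℕ) (v : Fin m → ℕ) (i j : Fin 3)
    (h : i ≠ j) :
    WordLengthLE (stdGens m) (stx i j h (2 ^ d * ∏ l, X l ^ v l))
      (8 * (1 + (d + ∑ l, v l) ^ 2)) := by
  have hfactors : ∀ p ∈ List.replicate d 2 ++ monomialFactors v, ∀ i j (h : i ≠ j),
      WordLengthLE (stdGens m) (stx i j h p) 2 := by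
    simp only [List.mem_append, List.mem_replicate, monomialFactors, List.mem_flatMap]
    rintro p (⟨-, rfl⟩ | ⟨l, -, -, rfl⟩) i j h
    · exact wordLengthLE_stx_two i j h
    · exact (wordLengthLE_stx_X i j h l).mono one_le_two
  simpa [prod_monomialFactors, length_monomialFactors] using
    wordLengthLE_stx_list_prod stdGens_inv_mem
      (fun i j h => (wordLengthLE_stx_one i j h).mono one_le_two) hfactors i j h

theorem wordLengthLE_stx_intCast_mul_monomial (a : ℤ) (v : Fin m → ℕ) (i j : Fin 3)
    (h : i ≠ j) :
    WordLengthLE (stdGens m) (stx i j h ((a : MvPolynomial (Fin m) ℤ) * ∏ l, X l ^ v l))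
      (16 * (Nat.log 2 a.natAbs + 1) * (1 + (Nat.log 2 a.natAbs + 1) ^ 2) +
        16 * (1 + (∑ l, v l) ^ 2)) := by
  set K := Nat.log 2 a.natAbs + 1
  obtain ⟨k, hik, hkj⟩ := Fin.exists_ne_and_ne i j
  have hpow (e : ℕ) (he : e < K) :
      WordLengthLE (stdGens m) (stx i k hik (2 ^ e)) (8 * (1 + K ^ 2)) := by
    have := wordLengthLE_stx_two_pow_mul_monomial (m := m) e 0 i k hik
    simp only [Pi.zero_apply, pow_zero, Finset.prod_const_one, mul_one, Finset.sum_const_zero,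
      add_zero] at this
    exact this.mono (by gcongr)
  have hconst := wordLengthLE_stx_intCast_of_natAbs_lt_two_pow stdGens_inv_mem i k hik hpow
    (Nat.lt_pow_succ_log_self one_lt_two a.natAbs)
  have hmonomial := wordLengthLE_stx_two_pow_mul_monomial 0 v k j hkj
  rw [pow_zero, one_mul] at hmonomial
  rw [stx_mul_eq_commutatorElement i k j hik hkj h]
  exact (hconst.commutatorElement stdGens_inv_mem hmonomial).mono (le_of_eq (by ring))

end Polynomial

theorem mul_one_add_sq_le_of_le_add_one {K L : ℝ} (hK₀ : 0 ≤ K) (hL : 0 ≤ L) (hK : K ≤ L + 1) :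
    K * (1 + K ^ 2) ≤ 9 * (1 + L ^ 3) := by
  have hL2 : L ^ 2 ≤ 1 + L ^ 3 := by nlinarith [sq_nonneg (L - 1), sq_nonneg L]
  have hL1 : L ≤ 1 + L ^ 3 := by nlinarith [sq_nonneg (L - 1), sq_nonneg L]
  calc K * (1 + K ^ 2) ≤ (L + 1) * (1 + (L + 1) ^ 2) := by gcongr
    _ = L ^ 3 + 3 * L ^ 2 + 4 * L + 2 := by ring
    _ ≤ 9 * (1 + L ^ 3) := by linarith [pow_nonneg hL 3]

/-- Fix `m ≥ 1` and let `S` be the standard generating set of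
`St_{A₂}(ℤ[t₁,…,t_m])`.  There is a universal constant `C > 0` such that for all
`1 ≤ i,j ≤ 3` with `i ≠ j`:
(i) for every `d ∈ ℕ` and every monomial `t̲`,
    `|x_{i,j}(2^d·t̲)|_S ≤ C·(1 + (d + deg t̲)²)`; and
(ii) for every `a ∈ ℤ ∖ {0}` and every monomial `t̲`,
    `|x_{i,j}(a·t̲)|_S ≤ C·(1 + (log₂|a|)³ + (deg t̲)²)`. -/
theorem steinberg_word_length_bound :
    ∃ C : ℝ, 0 < C ∧
      ∀ (m : ℕ), 1 ≤ m → ∀ (i j : Fin 3) (h : i ≠ j),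
        (∀ (d : ℕ) (v : Fin m → ℕ),
          (wordLength (stdGens m)
              (stx i j h ((2 ^ d : MvPolynomial (Fin m) ℤ) *
                ∏ l, MvPolynomial.X l ^ v l)) : ℝ) ≤
            C * (1 + ((d : ℝ) + ∑ l, (v l : ℝ)) ^ 2)) ∧
        (∀ a : ℤ, a ≠ 0 → ∀ v : Fin m → ℕ,
          (wordLength (stdGens m)
              (stx i j h ((a : MvPolynomial (Fin m) ℤ) *
                ∏ l, MvPolynomial.X l ^ v l)) : ℝ) ≤
            C * (1 + (Real.logb 2 |(a : ℝ)|) ^ 3 + (∑ l, (v l : ℝ)) ^ 2)) := by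
  refine ⟨160, by norm_num, fun m _ i j h => ⟨fun d v => ?_, fun a _ v => ?_⟩⟩
  · refine (Nat.cast_le.mpr
      (wordLengthLE_stx_two_pow_mul_monomial d v i j h).wordLength_le).trans ?_
    push_cast
    linarith [sq_nonneg ((d : ℝ) + ∑ l, (v l : ℝ))]
  · refine (Nat.cast_le.mpr
      (wordLengthLE_stx_intCast_mul_monomial a v i j h).wordLength_le).trans ?_
    have hlog : (Nat.log 2 a.natAbs : ℝ) ≤ Real.logb 2 |(a : ℝ)| := by
      simpa [Nat.cast_natAbs] using Real.natLog_le_logb a.natAbs 2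
    have hlog₀ : 0 ≤ Real.logb 2 |(a : ℝ)| := (Nat.cast_nonneg _).trans hlog
    have hcube := mul_one_add_sq_le_of_le_add_one (Nat.log 2 a.natAbs + 1).cast_nonneg hlog₀
      (by push_cast; linarith)
    push_cast at hcube ⊢
    linarith [sq_nonneg (∑ l, (v l : ℝ)), pow_nonneg hlog₀ 3]
end

section
/- Let E be a real Banach space, D ∈ ℕ, C > 0, F₁, F₂ : ℕ⁶ → E and ε : ℕ → [0,∞). Assume: (A1) for every d ≥ D and every (d₁,...,d₆) ∈ (ℕ ∩ [d,3d])⁶ with d₂ − (d₁+d₃) ≥ d−1 and d₅ − (d₄+d₆) ≥ d−1, ‖F₁(d₁,d₂,d₃,d₄,d₅,d₆) − F₂(d₃,d₂,d₁,d₆,d₅,d₄)‖ ≤ C·ε(d); and (A2) for every d ≥ D, every (d₁,...,d₆) ∈ (ℕ ∩ [d,3d])⁶, every 2 ≤ i ≤ 5 with max{d_{i−1}, d_{i+1}} ≥ d_i and d_i < 3d, and each j ∈ {1,2}, ‖F_j(d₁,...,d_i,...,d₆) − F_j(d₁,...,d_i+1,...,d₆)‖ ≤ C·ε(d). If ∑_{d≥D}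 d·ε(d) < ∞, then the sequence (ξ_k)_{k∈ℕ} defined by ξ_k = F₁((k+1)/2, ..., (k+1)/2) for odd k and ξ_k = F₂(k/2, ..., k/2) for even k (all six arguments equal) is a Cauchy sequence in E. -/
section Aux

variable {E : Type*} [NormedAddCommGroup E]

/-- Telescoping a chain of small steps. -/
lemma gc_chain (g : ℕ → E) (c : ℝ) (lo : ℕ) :
    ∀ hi, lo ≤ hi → (∀ b, lo ≤ b → b < hi → ‖g b - g (b + 1)‖ ≤ c) →
      ‖g lo - g hi‖ ≤ ((hi - lo : ℕ) : ℝ) * c := by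
  intro hi
  induction hi with
  | zero =>
      intro h _
      have : lo = 0 := Nat.le_zero.mp h
      simp [this]
  | succ n ih =>
      intro h hstep
      rcases Nat.lt_or_ge lo (n + 1) with hlt | hge
      · have hlo : lo ≤ n := Nat.lt_succ_iff.mp hlt
        have h1 := ih hlo (fun b hb hb' => hstep b hb (by omega))
        have h2 := hstep n hlo (Nat.lt_succ_self n)
        have tri : ‖g lo - g (n + 1)‖ ≤ ‖g lo - g n‖ + ‖g n - g (n + 1)‖ :=
          norm_sub_le_norm_sub_add_norm_sub _ _ _
        have hc : ((n + 1 - lo : ℕ) : ℝ) = ((n - lo : ℕ) : ℝ) + 1 := by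
          push_cast [Nat.succ_sub hlo]
          ring
        calc ‖g lo - g (n + 1)‖ ≤ ‖g lo - g n‖ + ‖g n - g (n + 1)‖ := tri
          _ ≤ ((n - lo : ℕ) : ℝ) * c + c := add_le_add h1 h2
          _ = ((n + 1 - lo : ℕ) : ℝ) * c := by rw [hc]; ring
      · have : lo = n + 1 := le_antisymm h hge
        simp [this]

/-- Moving from `(u,s,s,s,s,u)` to `(u,T,m,m,T,u)` using (A2)-type step bounds at
positions 2–5, all arguments staying inside `[d, 3d]`. -/
lemma gc_halfpath (G : ℕ → ℕ → ℕ → ℕ → ℕ → ℕ → E) (c : ℝ) (d u s m T : ℕ)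
    (hud : d ≤ u) (hu3 : u ≤ 3 * d)
    (hsd : d ≤ s) (hsT : s ≤ T) (hmd : d ≤ m) (hmT : m ≤ T) (hT3 : T ≤ 3 * d)
    (h2 : ∀ d₁ d₂ d₃ d₄ d₅ d₆ : ℕ,
      d ≤ d₁ → d₁ ≤ 3 * d → d ≤ d₂ → d₂ ≤ 3 * d → d ≤ d₃ → d₃ ≤ 3 * d →
      d ≤ d₄ → d₄ ≤ 3 * d → d ≤ d₅ → d₅ ≤ 3 * d → d ≤ d₆ → d₆ ≤ 3 * d →
      d₂ ≤ max d₁ d₃ → d₂ < 3 * d →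
      ‖G d₁ d₂ d₃ d₄ d₅ d₆ - G d₁ (d₂ + 1) d₃ d₄ d₅ d₆‖ ≤ c)
    (h3 : ∀ d₁ d₂ d₃ d₄ d₅ d₆ : ℕ,
      d ≤ d₁ → d₁ ≤ 3 * d → d ≤ d₂ → d₂ ≤ 3 * d → d ≤ d₃ → d₃ ≤ 3 * d →
      d ≤ d₄ → d₄ ≤ 3 * d → d ≤ d₅ → d₅ ≤ 3 * d → d ≤ d₆ → d₆ ≤ 3 * d →
      d₃ ≤ max d₂ d₄ → d₃ < 3 * d →
      ‖G d₁ d₂ d₃ d₄ d₅ d₆ - G d₁ d₂ (d₃ + 1) d₄ d₅ d₆‖ ≤ c)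
    (h4 : ∀ d₁ d₂ d₃ d₄ d₅ d₆ : ℕ,
      d ≤ d₁ → d₁ ≤ 3 * d → d ≤ d₂ → d₂ ≤ 3 * d → d ≤ d₃ → d₃ ≤ 3 * d →
      d ≤ d₄ → d₄ ≤ 3 * d → d ≤ d₅ → d₅ ≤ 3 * d → d ≤ d₆ → d₆ ≤ 3 * d →
      d₄ ≤ max d₃ d₅ → d₄ < 3 * d →
      ‖G d₁ d₂ d₃ d₄ d₅ d₆ - G d₁ d₂ d₃ (d₄ + 1) d₅ d₆‖ ≤ c)
    (h5 : ∀ d₁ d₂ d₃ d₄ d₅ d₆ : ℕ,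
      d ≤ d₁ → d₁ ≤ 3 * d → d ≤ d₂ → d₂ ≤ 3 * d → d ≤ d₃ → d₃ ≤ 3 * d →
      d ≤ d₄ → d₄ ≤ 3 * d → d ≤ d₅ → d₅ ≤ 3 * d → d ≤ d₆ → d₆ ≤ 3 * d →
      d₅ ≤ max d₄ d₆ → d₅ < 3 * d →
      ‖G d₁ d₂ d₃ d₄ d₅ d₆ - G d₁ d₂ d₃ d₄ (d₅ + 1) d₆‖ ≤ c) :
    ‖G u s s s s u - G u T m m T u‖ ≤
      ((4 * (T - s) + 2 * (T - m) : ℕ) : ℝ) * c := by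
  have hT : T ≤ 3 * d := hT3
  have hs3 : s ≤ 3 * d := le_trans hsT hT3
  have hm3 : m ≤ 3 * d := le_trans hmT hT3
  -- Step 1: staircase raising positions 2 and 3 from s to T
  have c1 : ‖G u s s s s u - G u T T s s u‖ ≤ ((T - s : ℕ) : ℝ) * (2 * c) := by
    refine gc_chain (fun a => G u a a s s u) (2 * c) s T hsT ?_
    intro b hb hb'
    have hbd : d ≤ b := le_trans hsd hb
    have hb3 : b ≤ 3 * d := by omega
    have hb31 : b + 1 ≤ 3 * d := by omega
    have hstep3 := h3 u b b s s u hud hu3 hbd hb3 hbd hb3 hsd hs3 hsd hs3 hud hu3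
      (le_max_left _ _) (by omega)
    have hstep2 := h2 u b (b + 1) s s u hud hu3 hbd hb3 (by omega) hb31 hsd hs3
      hsd hs3 hud hu3 (le_trans (Nat.le_succ b) (le_max_right _ _)) (by omega)
    calc ‖G u b b s s u - G u (b + 1) (b + 1) s s u‖
        ≤ ‖G u b b s s u - G u b (b + 1) s s u‖ +
          ‖G u b (b + 1) s s u - G u (b + 1) (b + 1) s s u‖ :=
          norm_sub_le_norm_sub_add_norm_sub _ _ _
      _ ≤ c + c := add_le_add hstep3 hstep2
      _ = 2 * c := by ring
  -- Step 2: position 3 chain from m to T (with position 2 at T)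
  have c2 : ‖G u T m s s u - G u T T s s u‖ ≤ ((T - m : ℕ) : ℝ) * c := by
    refine gc_chain (fun b => G u T b s s u) c m T hmT ?_
    intro b hb hb'
    exact h3 u T b s s u hud hu3 (le_trans hsd hsT) hT (le_trans hmd hb) (by omega)
      hsd hs3 hsd hs3 hud hu3 (le_trans (le_of_lt hb') (le_max_left _ _)) (by omega)
  -- Step 3: staircase raising positions 4 and 5 from s to T
  have c3 : ‖G u T m s s u - G u T m T T u‖ ≤ ((T - s : ℕ) : ℝ) * (2 * c) := by
    refine gc_chain (fun a => G u T m a a u) (2 * c) s T hsT ?_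
    intro b hb hb'
    have hbd : d ≤ b := le_trans hsd hb
    have hb3 : b ≤ 3 * d := by omega
    have hb31 : b + 1 ≤ 3 * d := by omega
    have hstep4 := h4 u T m b b u hud hu3 (le_trans hsd hsT) hT hmd hm3 hbd hb3
      hbd hb3 hud hu3 (le_max_right _ _) (by omega)
    have hstep5 := h5 u T m (b + 1) b u hud hu3 (le_trans hsd hsT) hT hmd hm3
      (by omega) hb31 hbd hb3 hud hu3
      (le_trans (Nat.le_succ b) (le_max_left _ _)) (by omega)
    calc ‖G u T m b b u - G u T m (b + 1) (b + 1) u‖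
        ≤ ‖G u T m b b u - G u T m (b + 1) b u‖ +
          ‖G u T m (b + 1) b u - G u T m (b + 1) (b + 1) u‖ :=
          norm_sub_le_norm_sub_add_norm_sub _ _ _
      _ ≤ c + c := add_le_add hstep4 hstep5
      _ = 2 * c := by ring
  -- Step 4: position 4 chain from m to T (position 5 at T)
  have c4 : ‖G u T m m T u - G u T m T T u‖ ≤ ((T - m : ℕ) : ℝ) * c := by
    refine gc_chain (fun b => G u T m b T u) c m T hmT ?_
    intro b hb hb'
    exact h4 u T m b T u hud hu3 (le_trans hsd hsT) hT hmd hm3 (le_trans hmd hb)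
      (by omega) (le_trans hsd hsT) hT hud hu3
      (le_trans (le_of_lt hb') (le_max_right _ _)) (by omega)
  have tri : ‖G u s s s s u - G u T m m T u‖ ≤
      ‖G u s s s s u - G u T T s s u‖ + ‖G u T T s s u - G u T m s s u‖ +
      ‖G u T m s s u - G u T m T T u‖ + ‖G u T m T T u - G u T m m T u‖ := by
    have t1 := norm_sub_le_norm_sub_add_norm_sub (G u s s s s u) (G u T T s s u)
      (G u T m m T u)
    have t2 := norm_sub_le_norm_sub_add_norm_sub (G u T T s s u) (G u T m s s u)
      (G u T m m T u)
    have t3 := norm_sub_le_norm_sub_add_norm_sub (G u T m s s u) (G u T m T T u)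
      (G u T m m T u)
    linarith
  have e2 : ‖G u T T s s u - G u T m s s u‖ = ‖G u T m s s u - G u T T s s u‖ :=
    norm_sub_rev _ _
  have e4 : ‖G u T m T T u - G u T m m T u‖ = ‖G u T m m T u - G u T m T T u‖ :=
    norm_sub_rev _ _
  rw [e2, e4] at tri
  have harith : ((4 * (T - s) + 2 * (T - m) : ℕ) : ℝ) * c =
      ((T - s : ℕ) : ℝ) * (2 * c) + ((T - m : ℕ) : ℝ) * c +
      ((T - s : ℕ) : ℝ) * (2 * c) + ((T - m : ℕ) : ℝ) * c := by
    push_cast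
    ring
  linarith

end Aux

/-- **general convergence argument.** Let `E` be a real Banach space,
`D ∈ ℕ`, `C > 0`, `F₁, F₂ : ℕ⁶ → E` and `ε : ℕ → [0,∞)`.  Assume (A1) and (A2) below.
If `∑_{d ≥ D} d·ε(d) < ∞`, then the sequence `(ξ_k)` given by
`ξ_k = F₁((k+1)/2, …, (k+1)/2)` for odd `k` and `ξ_k = F₂(k/2, …, k/2)` for even `k`
is a Cauchy sequence in `E`. -/
theorem general_convergence
    {E : Type*} [NormedAddCommGroup E] [NormedSpace ℝ E] [CompleteSpace E]
    (D : ℕ) (C : ℝ) (hC : 0 < C)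
    (F₁ F₂ : ℕ → ℕ → ℕ → ℕ → ℕ → ℕ → E) (ε : ℕ → ℝ) (hε : ∀ d, 0 ≤ ε d)
    -- (A1)
    (hA1 : ∀ d, D ≤ d → ∀ d₁ d₂ d₃ d₄ d₅ d₆ : ℕ,
      d ≤ d₁ → d₁ ≤ 3 * d → d ≤ d₂ → d₂ ≤ 3 * d → d ≤ d₃ → d₃ ≤ 3 * d →
      d ≤ d₄ → d₄ ≤ 3 * d → d ≤ d₅ → d₅ ≤ 3 * d → d ≤ d₆ → d₆ ≤ 3 * d →
      d₁ + d₃ + d ≤ d₂ + 1 → d₄ + d₆ + d ≤ d₅ + 1 →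
      ‖F₁ d₁ d₂ d₃ d₄ d₅ d₆ - F₂ d₃ d₂ d₁ d₆ d₅ d₄‖ ≤ C * ε d)
    -- (A2), position i = 2
    (hA2₂ : ∀ d, D ≤ d → ∀ d₁ d₂ d₃ d₄ d₅ d₆ : ℕ,
      d ≤ d₁ → d₁ ≤ 3 * d → d ≤ d₂ → d₂ ≤ 3 * d → d ≤ d₃ → d₃ ≤ 3 * d →
      d ≤ d₄ → d₄ ≤ 3 * d → d ≤ d₅ → d₅ ≤ 3 * d → d ≤ d₆ → d₆ ≤ 3 * d →
      d₂ ≤ max d₁ d₃ → d₂ < 3 * d →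
      ‖F₁ d₁ d₂ d₃ d₄ d₅ d₆ - F₁ d₁ (d₂ + 1) d₃ d₄ d₅ d₆‖ ≤ C * ε d ∧
      ‖F₂ d₁ d₂ d₃ d₄ d₅ d₆ - F₂ d₁ (d₂ + 1) d₃ d₄ d₅ d₆‖ ≤ C * ε d)
    -- (A2), position i = 3
    (hA2₃ : ∀ d, D ≤ d → ∀ d₁ d₂ d₃ d₄ d₅ d₆ : ℕ,
      d ≤ d₁ → d₁ ≤ 3 * d → d ≤ d₂ → d₂ ≤ 3 * d → d ≤ d₃ → d₃ ≤ 3 * d →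
      d ≤ d₄ → d₄ ≤ 3 * d → d ≤ d₅ → d₅ ≤ 3 * d → d ≤ d₆ → d₆ ≤ 3 * d →
      d₃ ≤ max d₂ d₄ → d₃ < 3 * d →
      ‖F₁ d₁ d₂ d₃ d₄ d₅ d₆ - F₁ d₁ d₂ (d₃ + 1) d₄ d₅ d₆‖ ≤ C * ε d ∧
      ‖F₂ d₁ d₂ d₃ d₄ d₅ d₆ - F₂ d₁ d₂ (d₃ + 1) d₄ d₅ d₆‖ ≤ C * ε d)
    -- (A2), position i = 4
    (hA2₄ : ∀ d, D ≤ d → ∀ d₁ d₂ d₃ d₄ d₅ d₆ : ℕ,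
      d ≤ d₁ → d₁ ≤ 3 * d → d ≤ d₂ → d₂ ≤ 3 * d → d ≤ d₃ → d₃ ≤ 3 * d →
      d ≤ d₄ → d₄ ≤ 3 * d → d ≤ d₅ → d₅ ≤ 3 * d → d ≤ d₆ → d₆ ≤ 3 * d →
      d₄ ≤ max d₃ d₅ → d₄ < 3 * d →
      ‖F₁ d₁ d₂ d₃ d₄ d₅ d₆ - F₁ d₁ d₂ d₃ (d₄ + 1) d₅ d₆‖ ≤ C * ε d ∧
      ‖F₂ d₁ d₂ d₃ d₄ d₅ d₆ - F₂ d₁ d₂ d₃ (d₄ + 1) d₅ d₆‖ ≤ C * ε d)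
    -- (A2), position i = 5
    (hA2₅ : ∀ d, D ≤ d → ∀ d₁ d₂ d₃ d₄ d₅ d₆ : ℕ,
      d ≤ d₁ → d₁ ≤ 3 * d → d ≤ d₂ → d₂ ≤ 3 * d → d ≤ d₃ → d₃ ≤ 3 * d →
      d ≤ d₄ → d₄ ≤ 3 * d → d ≤ d₅ → d₅ ≤ 3 * d → d ≤ d₆ → d₆ ≤ 3 * d →
      d₅ ≤ max d₄ d₆ → d₅ < 3 * d →
      ‖F₁ d₁ d₂ d₃ d₄ d₅ d₆ - F₁ d₁ d₂ d₃ d₄ (d₅ + 1) d₆‖ ≤ C * ε d ∧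
      ‖F₂ d₁ d₂ d₃ d₄ d₅ d₆ - F₂ d₁ d₂ d₃ d₄ (d₅ + 1) d₆‖ ≤ C * ε d)
    (hsum : Summable fun d : ℕ => (d : ℝ) * ε d) :
    CauchySeq (fun k : ℕ =>
      if k % 2 = 1 then
        F₁ ((k + 1) / 2) ((k + 1) / 2) ((k + 1) / 2) ((k + 1) / 2) ((k + 1) / 2)
          ((k + 1) / 2)
      else F₂ (k / 2) (k / 2) (k / 2) (k / 2) (k / 2) (k / 2)) := by
  set ξ : ℕ → E := fun k : ℕ =>
      if k % 2 = 1 then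
        F₁ ((k + 1) / 2) ((k + 1) / 2) ((k + 1) / 2) ((k + 1) / 2) ((k + 1) / 2)
          ((k + 1) / 2)
      else F₂ (k / 2) (k / 2) (k / 2) (k / 2) (k / 2) (k / 2) with hξ
  set a : ℕ → ℝ := fun d => (d : ℝ) * ε d with ha
  have ha_nn : ∀ n, 0 ≤ a n := fun n => mul_nonneg (Nat.cast_nonneg n) (hε n)
  -- Core estimate 1 : odd-to-even step
  have E1 : ∀ e : ℕ, D ≤ e → 1 ≤ e →
      ‖F₁ e e e e e e - F₂ e e e e e e‖ ≤ 24 * C * a e := by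
    intro e hDe h1e
    set c : ℝ := C * ε e with hc
    have hcnn : 0 ≤ c := mul_nonneg (le_of_lt hC) (hε e)
    set T : ℕ := 3 * e - 1 with hT
    have heT : e ≤ T := by omega
    have hT3 : T ≤ 3 * e := by omega
    have P1 : ‖F₁ e e e e e e - F₁ e T e e T e‖ ≤
        ((4 * (T - e) + 2 * (T - e) : ℕ) : ℝ) * c :=
      gc_halfpath F₁ c e e e e T le_rfl (by omega) le_rfl heT le_rfl heT hT3
        (fun d₁ d₂ d₃ d₄ d₅ d₆ a1 a2 a3 a4 a5 a6 a7 a8 a9 a10 a11 a12 b1 b2 =>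
          (hA2₂ e hDe d₁ d₂ d₃ d₄ d₅ d₆ a1 a2 a3 a4 a5 a6 a7 a8 a9 a10 a11 a12 b1 b2).1)
        (fun d₁ d₂ d₃ d₄ d₅ d₆ a1 a2 a3 a4 a5 a6 a7 a8 a9 a10 a11 a12 b1 b2 =>
          (hA2₃ e hDe d₁ d₂ d₃ d₄ d₅ d₆ a1 a2 a3 a4 a5 a6 a7 a8 a9 a10 a11 a12 b1 b2).1)
        (fun d₁ d₂ d₃ d₄ d₅ d₆ a1 a2 a3 a4 a5 a6 a7 a8 a9 a10 a11 a12 b1 b2 =>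
          (hA2₄ e hDe d₁ d₂ d₃ d₄ d₅ d₆ a1 a2 a3 a4 a5 a6 a7 a8 a9 a10 a11 a12 b1 b2).1)
        (fun d₁ d₂ d₃ d₄ d₅ d₆ a1 a2 a3 a4 a5 a6 a7 a8 a9 a10 a11 a12 b1 b2 =>
          (hA2₅ e hDe d₁ d₂ d₃ d₄ d₅ d₆ a1 a2 a3 a4 a5 a6 a7 a8 a9 a10 a11 a12 b1 b2).1)
    have P2 : ‖F₂ e e e e e e - F₂ e T e e T e‖ ≤
        ((4 * (T - e) + 2 * (T - e) : ℕ) : ℝ) * c :=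
      gc_halfpath F₂ c e e e e T le_rfl (by omega) le_rfl heT le_rfl heT hT3
        (fun d₁ d₂ d₃ d₄ d₅ d₆ a1 a2 a3 a4 a5 a6 a7 a8 a9 a10 a11 a12 b1 b2 =>
          (hA2₂ e hDe d₁ d₂ d₃ d₄ d₅ d₆ a1 a2 a3 a4 a5 a6 a7 a8 a9 a10 a11 a12 b1 b2).2)
        (fun d₁ d₂ d₃ d₄ d₅ d₆ a1 a2 a3 a4 a5 a6 a7 a8 a9 a10 a11 a12 b1 b2 =>
          (hA2₃ e hDe d₁ d₂ d₃ d₄ d₅ d₆ a1 a2 a3 a4 a5 a6 a7 a8 a9 a10 a11 a12 b1 b2).2)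
        (fun d₁ d₂ d₃ d₄ d₅ d₆ a1 a2 a3 a4 a5 a6 a7 a8 a9 a10 a11 a12 b1 b2 =>
          (hA2₄ e hDe d₁ d₂ d₃ d₄ d₅ d₆ a1 a2 a3 a4 a5 a6 a7 a8 a9 a10 a11 a12 b1 b2).2)
        (fun d₁ d₂ d₃ d₄ d₅ d₆ a1 a2 a3 a4 a5 a6 a7 a8 a9 a10 a11 a12 b1 b2 =>
          (hA2₅ e hDe d₁ d₂ d₃ d₄ d₅ d₆ a1 a2 a3 a4 a5 a6 a7 a8 a9 a10 a11 a12 b1 b2).2)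
    have PA : ‖F₁ e T e e T e - F₂ e T e e T e‖ ≤ c :=
      hA1 e hDe e T e e T e le_rfl (by omega) heT hT3 le_rfl (by omega)
        le_rfl (by omega) heT hT3 le_rfl (by omega) (by omega) (by omega)
    have tri : ‖F₁ e e e e e e - F₂ e e e e e e‖ ≤
        ‖F₁ e e e e e e - F₁ e T e e T e‖ + ‖F₁ e T e e T e - F₂ e T e e T e‖ +
        ‖F₂ e T e e T e - F₂ e e e e e e‖ := by
      have t1 := norm_sub_le_norm_sub_add_norm_sub (F₁ e e e e e e)
        (F₁ e T e e T e) (F₂ e e e e e e)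
      have t2 := norm_sub_le_norm_sub_add_norm_sub (F₁ e T e e T e)
        (F₂ e T e e T e) (F₂ e e e e e e)
      linarith
    rw [norm_sub_rev (F₂ e T e e T e)] at tri
    have hcast : ((4 * (T - e) + 2 * (T - e) : ℕ) : ℝ) = 6 * (2 * (e : ℝ) - 1) := by
      have : (4 * (T - e) + 2 * (T - e) : ℕ) = 12 * e - 6 := by omega
      rw [this]
      have h6 : (6 : ℕ) ≤ 12 * e := by omega
      push_cast [Nat.cast_sub h6]
      ring
    rw [hcast] at P1 P2
    have hae : a e = (e : ℝ) * ε e := rfl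
    have he1 : (1 : ℝ) ≤ (e : ℝ) := by exact_mod_cast h1e
    calc ‖F₁ e e e e e e - F₂ e e e e e e‖
        ≤ 6 * (2 * (e : ℝ) - 1) * c + c + 6 * (2 * (e : ℝ) - 1) * c := by linarith
      _ ≤ 24 * (e : ℝ) * c := by nlinarith
      _ = 24 * C * a e := by rw [hae, hc]; ring
  -- Core estimate 2 : even-to-odd step
  have E2 : ∀ e : ℕ, D ≤ e → 1 ≤ e →
      ‖F₂ e e e e e e - F₁ (e + 1) (e + 1) (e + 1) (e + 1) (e + 1) (e + 1)‖ ≤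
        24 * C * a e := by
    intro e hDe h1e
    set c : ℝ := C * ε e with hc
    have hcnn : 0 ≤ c := mul_nonneg (le_of_lt hC) (hε e)
    set T : ℕ := 3 * e with hT
    have Q2 : ‖F₂ e e e e e e - F₂ e T (e + 1) (e + 1) T e‖ ≤
        ((4 * (T - e) + 2 * (T - (e + 1)) : ℕ) : ℝ) * c :=
      gc_halfpath F₂ c e e e (e + 1) T le_rfl (by omega) le_rfl (by omega)
        (by omega) (by omega) (by omega)
        (fun d₁ d₂ d₃ d₄ d₅ d₆ a1 a2 a3 a4 a5 a6 a7 a8 a9 a10 a11 a12 b1 b2 =>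
          (hA2₂ e hDe d₁ d₂ d₃ d₄ d₅ d₆ a1 a2 a3 a4 a5 a6 a7 a8 a9 a10 a11 a12 b1 b2).2)
        (fun d₁ d₂ d₃ d₄ d₅ d₆ a1 a2 a3 a4 a5 a6 a7 a8 a9 a10 a11 a12 b1 b2 =>
          (hA2₃ e hDe d₁ d₂ d₃ d₄ d₅ d₆ a1 a2 a3 a4 a5 a6 a7 a8 a9 a10 a11 a12 b1 b2).2)
        (fun d₁ d₂ d₃ d₄ d₅ d₆ a1 a2 a3 a4 a5 a6 a7 a8 a9 a10 a11 a12 b1 b2 =>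
          (hA2₄ e hDe d₁ d₂ d₃ d₄ d₅ d₆ a1 a2 a3 a4 a5 a6 a7 a8 a9 a10 a11 a12 b1 b2).2)
        (fun d₁ d₂ d₃ d₄ d₅ d₆ a1 a2 a3 a4 a5 a6 a7 a8 a9 a10 a11 a12 b1 b2 =>
          (hA2₅ e hDe d₁ d₂ d₃ d₄ d₅ d₆ a1 a2 a3 a4 a5 a6 a7 a8 a9 a10 a11 a12 b1 b2).2)
    have Q1 : ‖F₁ (e + 1) (e + 1) (e + 1) (e + 1) (e + 1) (e + 1) -
        F₁ (e + 1) T e e T (e + 1)‖ ≤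
        ((4 * (T - (e + 1)) + 2 * (T - e) : ℕ) : ℝ) * c :=
      gc_halfpath F₁ c e (e + 1) (e + 1) e T (by omega) (by omega) (by omega)
        (by omega) le_rfl (by omega) (by omega)
        (fun d₁ d₂ d₃ d₄ d₅ d₆ a1 a2 a3 a4 a5 a6 a7 a8 a9 a10 a11 a12 b1 b2 =>
          (hA2₂ e hDe d₁ d₂ d₃ d₄ d₅ d₆ a1 a2 a3 a4 a5 a6 a7 a8 a9 a10 a11 a12 b1 b2).1)
        (fun d₁ d₂ d₃ d₄ d₅ d₆ a1 a2 a3 a4 a5 a6 a7 a8 a9 a10 a11 a12 b1 b2 =>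
          (hA2₃ e hDe d₁ d₂ d₃ d₄ d₅ d₆ a1 a2 a3 a4 a5 a6 a7 a8 a9 a10 a11 a12 b1 b2).1)
        (fun d₁ d₂ d₃ d₄ d₅ d₆ a1 a2 a3 a4 a5 a6 a7 a8 a9 a10 a11 a12 b1 b2 =>
          (hA2₄ e hDe d₁ d₂ d₃ d₄ d₅ d₆ a1 a2 a3 a4 a5 a6 a7 a8 a9 a10 a11 a12 b1 b2).1)
        (fun d₁ d₂ d₃ d₄ d₅ d₆ a1 a2 a3 a4 a5 a6 a7 a8 a9 a10 a11 a12 b1 b2 =>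
          (hA2₅ e hDe d₁ d₂ d₃ d₄ d₅ d₆ a1 a2 a3 a4 a5 a6 a7 a8 a9 a10 a11 a12 b1 b2).1)
    have QA : ‖F₁ (e + 1) T e e T (e + 1) - F₂ e T (e + 1) (e + 1) T e‖ ≤ c :=
      hA1 e hDe (e + 1) T e e T (e + 1) (by omega) (by omega) (by omega) (by omega)
        le_rfl (by omega) le_rfl (by omega) (by omega) (by omega) (by omega)
        (by omega) (by omega) (by omega)
    have tri : ‖F₂ e e e e e e -
        F₁ (e + 1) (e + 1) (e + 1) (e + 1) (e + 1) (e + 1)‖ ≤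
        ‖F₂ e e e e e e - F₂ e T (e + 1) (e + 1) T e‖ +
        ‖F₂ e T (e + 1) (e + 1) T e - F₁ (e + 1) T e e T (e + 1)‖ +
        ‖F₁ (e + 1) T e e T (e + 1) -
          F₁ (e + 1) (e + 1) (e + 1) (e + 1) (e + 1) (e + 1)‖ := by
      have t1 := norm_sub_le_norm_sub_add_norm_sub (F₂ e e e e e e)
        (F₂ e T (e + 1) (e + 1) T e)
        (F₁ (e + 1) (e + 1) (e + 1) (e + 1) (e + 1) (e + 1))
      have t2 := norm_sub_le_norm_sub_add_norm_sub (F₂ e T (e + 1) (e + 1) T e)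
        (F₁ (e + 1) T e e T (e + 1))
        (F₁ (e + 1) (e + 1) (e + 1) (e + 1) (e + 1) (e + 1))
      linarith
    have r2 : ‖F₂ e T (e + 1) (e + 1) T e - F₁ (e + 1) T e e T (e + 1)‖ =
        ‖F₁ (e + 1) T e e T (e + 1) - F₂ e T (e + 1) (e + 1) T e‖ :=
      norm_sub_rev _ _
    have r3 : ‖F₁ (e + 1) T e e T (e + 1) -
        F₁ (e + 1) (e + 1) (e + 1) (e + 1) (e + 1) (e + 1)‖ =
        ‖F₁ (e + 1) (e + 1) (e + 1) (e + 1) (e + 1) (e + 1) -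
        F₁ (e + 1) T e e T (e + 1)‖ := norm_sub_rev _ _
    have hc2 : ((4 * (T - e) + 2 * (T - (e + 1)) : ℕ) : ℝ) ≤ 12 * (e : ℝ) - 1 := by
      have h' : (4 * (T - e) + 2 * (T - (e + 1)) : ℕ) ≤ 12 * e - 1 := by omega
      have h'' : (1 : ℕ) ≤ 12 * e := by omega
      calc ((4 * (T - e) + 2 * (T - (e + 1)) : ℕ) : ℝ) ≤ ((12 * e - 1 : ℕ) : ℝ) := by
            exact_mod_cast h'
        _ = 12 * (e : ℝ) - 1 := by push_cast [Nat.cast_sub h'']; ring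
    have hc1 : ((4 * (T - (e + 1)) + 2 * (T - e) : ℕ) : ℝ) ≤ 12 * (e : ℝ) - 1 := by
      have h' : (4 * (T - (e + 1)) + 2 * (T - e) : ℕ) ≤ 12 * e - 1 := by omega
      have h'' : (1 : ℕ) ≤ 12 * e := by omega
      calc ((4 * (T - (e + 1)) + 2 * (T - e) : ℕ) : ℝ) ≤ ((12 * e - 1 : ℕ) : ℝ) := by
            exact_mod_cast h'
        _ = 12 * (e : ℝ) - 1 := by push_cast [Nat.cast_sub h'']; ring
    have he1 : (1 : ℝ) ≤ (e : ℝ) := by exact_mod_cast h1e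
    have hae : a e = (e : ℝ) * ε e := rfl
    have hQ2' := le_trans Q2 (mul_le_mul_of_nonneg_right hc2 hcnn)
    have hQ1' := le_trans Q1 (mul_le_mul_of_nonneg_right hc1 hcnn)
    calc ‖F₂ e e e e e e - F₁ (e + 1) (e + 1) (e + 1) (e + 1) (e + 1) (e + 1)‖
        ≤ (12 * (e : ℝ) - 1) * c + c + (12 * (e : ℝ) - 1) * c := by linarith
      _ ≤ 24 * (e : ℝ) * c := by nlinarith
      _ = 24 * C * a e := by rw [hae, hc]; ring
  -- Summability of the comparison sequence
  set N : ℕ := 2 * max D 1 with hN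
  set b : ℕ → ℝ := fun k =>
    (if k < N then dist (ξ k) (ξ (k + 1)) else 0) + 24 * C * a ((k + 1) / 2) with hb
  have hhalf : Summable fun k : ℕ => a ((k + 1) / 2) := by
    apply Summable.even_add_odd
    · have h1 : ∀ n : ℕ, (2 * n + 1) / 2 = n := by intro n; omega
      simpa [h1] using hsum
    · have h2 : ∀ n : ℕ, (2 * n + 1 + 1) / 2 = n + 1 := by intro n; omega
      have := (summable_nat_add_iff (f := fun d : ℕ => (d : ℝ) * ε d) 1).2 hsum
      simpa [h2, ha] using this
  have hbsumm : Summable b := by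
    apply Summable.add
    · apply summable_of_ne_finset_zero (s := Finset.range N)
      intro k hk
      have : ¬ k < N := by simpa using hk
      simp [this]
    · exact hhalf.mul_left _
  refine cauchySeq_of_dist_le_of_summable b ?_ hbsumm
  intro n
  have hnn : 0 ≤ 24 * C * a ((n + 1) / 2) :=
    mul_nonneg (mul_nonneg (by norm_num) (le_of_lt hC)) (ha_nn _)
  by_cases hn : n < N
  · have : b n = dist (ξ n) (ξ (n + 1)) + 24 * C * a ((n + 1) / 2) := by
      simp [hb, hn]
    rw [this]
    exact le_add_of_nonneg_right hnn
  · have hbn : b n = 24 * C * a ((n + 1) / 2) := by simp [hb, hn]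
    rw [hbn]
    push_neg at hn
    rcases Nat.mod_two_eq_zero_or_one n with hpar | hpar
    · -- n even : ξ n = F₂ (n/2)…, ξ (n+1) = F₁ ((n+2)/2)…
      set t : ℕ := n / 2 with hth
      have hn2 : n = 2 * t := by omega
      have hx1 : ξ n = F₂ t t t t t t := by
        simp only [hξ]
        rw [if_neg (by omega)]
      have hx2 : ξ (n + 1) = F₁ (t + 1) (t + 1) (t + 1) (t + 1) (t + 1) (t + 1) := by
        simp only [hξ]
        rw [if_pos (by omega)]
        congr 1 <;> omega
      have hdiv : (n + 1) / 2 = t := by omega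
      have hDt : D ≤ t := by
        have := le_max_left D 1; omega
      have h1t : 1 ≤ t := by
        have := le_max_right D 1; omega
      rw [hdiv, dist_eq_norm, hx1, hx2]
      exact E2 t hDt h1t
    · -- n odd : ξ n = F₁ ((n+1)/2)…, ξ (n+1) = F₂ ((n+1)/2)…
      set e : ℕ := (n + 1) / 2 with heh
      have hn2 : n = 2 * e - 1 := by omega
      have hx1 : ξ n = F₁ e e e e e e := by
        simp only [hξ]
        rw [if_pos hpar]
      have hx2 : ξ (n + 1) = F₂ e e e e e e := by
        simp only [hξ]
        rw [if_neg (by omega)]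
      have hDe : D ≤ e := by
        have := le_max_left D 1; omega
      have h1e : 1 ≤ e := by
        have := le_max_right D 1; omega
      rw [dist_eq_norm, hx1, hx2]
      exact E1 e hDe h1e
end

section
/- Let Φ be a root system in a finite-dimensional real vector space and let Γ be a group graded by Φ with root subgroups {K_α}_{α∈Φ}. If Φ₁, Φ₂ ∈ Borel(Φ) are co-maximal, then the subgroup K_{(Φ₁∪Φ₂)∖(Φ₁∩Φ₂)} normalizes both K_{Φ₁∩Φ₂} and K_{−(Φ₁∩Φ₂)}. -/
universe u v

variable {E : Type u} [AddCommGroup E] [Module ℝ E] [FiniteDimensional ℝ E]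
variable {Γ : Type v} [Group Γ]

open scoped commutatorElement

/-- `Φ` is a root system in `E`: a finite set spanning `E`, not containing `0`, and
closed under negation. -/
def IsRootSystem (Φ : Set E) : Prop :=
  Φ.Finite ∧ Submodule.span ℝ Φ = ⊤ ∧ (0 : E) ∉ Φ ∧ ∀ α ∈ Φ, -α ∈ Φ

/-- A linear functional is in general position with respect to `Φ` if it does not
vanish on `Φ` and takes distinct values at distinct roots. -/
def IsGeneralPosition (Φ : Set E) (f : E →ₗ[ℝ] ℝ) : Prop :=
  (∀ α ∈ Φ, f α ≠ 0) ∧ ∀ α ∈ Φ, ∀ β ∈ Φ, α ≠ β → f α ≠ f β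

/-- `B` is a Borel set of `Φ`. -/
def IsBorelSet (Φ B : Set E) : Prop :=
  ∃ f : E →ₗ[ℝ] ℝ, IsGeneralPosition Φ f ∧ B = {α ∈ Φ | 0 < f α}

/-- Two sets are co-minimal if their intersection spans a 1-dimensional subspace. -/
def CoMinimal (A B : Set E) : Prop :=
  Module.finrank ℝ ↥(Submodule.span ℝ (A ∩ B)) = 1

/-- Two Borel sets `A`, `B` are co-maximal if `A` and `−B` are co-minimal. -/
def CoMaximal (A B : Set E) : Prop := CoMinimal A (-B)

/-- The subgroup `K_A = ⟨K_α : α ∈ A⟩` generated by the root subgroups of roots in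
`A`. -/
def KA (K : E → Subgroup Γ) (A : Set E) : Subgroup Γ := ⨆ α ∈ A, K α

/-- The group `Γ` is graded by the root system `Φ` with root subgroups `K α`:
the `K α`, `α ∈ Φ`, generate `Γ`, and for `α, β ∈ Φ` with `β ∉ ℝ_{<0}·α`,
`[K_α, K_β] ⊆ ⟨K_γ : γ = aα + bβ ∈ Φ, a, b ≥ 1⟩`. -/
def IsGraded (Φ : Set E) (K : E → Subgroup Γ) : Prop :=
  (⨆ α ∈ Φ, K α) = ⊤ ∧
  ∀ α ∈ Φ, ∀ β ∈ Φ, (¬ ∃ c : ℝ, c < 0 ∧ β = c • α) →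
    ∀ g ∈ K α, ∀ h ∈ K β,
      ⁅g, h⁆ ∈ KA K {γ ∈ Φ | ∃ a b : ℝ, 1 ≤ a ∧ 1 ≤ b ∧ γ = a • α + b • β}

/-- The boundary of a Borel set `Φ₁` of `Φ`. -/
def borelBoundary (Φ Φ₁ : Set E) : Set E :=
  {α ∈ Φ₁ | ∃ Φ₂, IsBorelSet Φ Φ₂ ∧ CoMinimal Φ₁ Φ₂ ∧ α ∈ Φ₁ ∩ Φ₂}

/-- The core of a Borel set `Φ₁` of `Φ`. -/
def borelCore (Φ Φ₁ : Set E) : Set E := Φ₁ \ borelBoundary Φ Φ₁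

/-- The grading is strong if, in addition, for every Borel set `Φ₁` and every
`β ∈ Core(Φ₁)`, `K_β ⊆ ⟨K_γ : γ ∈ Φ₁ ∖ ℝ_{>0}·β⟩`. -/
def IsStronglyGraded (Φ : Set E) (K : E → Subgroup Γ) : Prop :=
  IsGraded Φ K ∧
  ∀ Φ₁ : Set E, IsBorelSet Φ Φ₁ → ∀ β ∈ borelCore Φ Φ₁,
    K β ≤ KA K (Φ₁ \ {x | ∃ c : ℝ, 0 < c ∧ x = c • β})

/-- A set of roots is irreducible if it admits no partition into two disjoint nonempty
subsets whose spans intersect trivially. -/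
def IsIrreducibleRootSet (Ψ : Set E) : Prop :=
  ¬ ∃ A B : Set E, A.Nonempty ∧ B.Nonempty ∧ Disjoint A B ∧ A ∪ B = Ψ ∧
    Submodule.span ℝ A ⊓ Submodule.span ℝ B = ⊥

/-- `Ψ` is a root subsystem of `Φ`. -/
def IsRootSubsystem (Φ Ψ : Set E) : Prop :=
  Ψ.Nonempty ∧ Ψ ⊆ Φ ∧ Φ ∩ (Submodule.span ℝ Ψ : Set E) = Ψ

/-- `Φ` is regular: every root lies in an irreducible root subsystem spanning a
2-dimensional subspace. -/
def IsRegularRootSystem (Φ : Set E) : Prop :=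
  ∀ α ∈ Φ, ∃ Ψ : Set E, IsRootSubsystem Φ Ψ ∧ IsIrreducibleRootSet Ψ ∧
    Module.finrank ℝ ↥(Submodule.span ℝ Ψ) = 2 ∧ α ∈ Ψ


/-! Write `Φ₁ = {f > 0}` and `Φ₂ = {g > 0}`. A root of `(Φ₁ ∪ Φ₂) \ (Φ₁ ∩ Φ₂)` is, up to sign,
in `Φ₁ ∩ -Φ₂`, so it lies on the line `L` spanned by `Φ₁ ∩ -Φ₂`; as `f` and `g` have opposite
signs on `L`, the line misses `Φ₁ ∩ Φ₂`.
For such a root `α`, `β ∈ Φ₁ ∩ Φ₂` and `a, b ≥ 1`, a root `γ = a • α + b • β` is off `L`, so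
`f` and `g` have the same sign at `γ`; whichever of them is positive at `α` is positive at `γ`,
hence `γ ∈ Φ₁ ∩ Φ₂`. As conjugation is `v ↦ ⁅u, v⁆ * v`, the grading then shows that
`K_α` normalizes `K_{Φ₁ ∩ Φ₂}`. The claim about `-(Φ₁ ∩ Φ₂)` is the same claim for the
co-maximal pair `-Φ₁, -Φ₂`, which has the same symmetric difference. -/

set_option linter.unusedSectionVars false

open Set Submodule

section RootSubgroups

variable (K : E → Subgroup Γ)

lemma KA_mono {A B : Set E} (h : A ⊆ B) : KA K A ≤ KA K B :=
  biSup_mono h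

lemma le_KA {A : Set E} {α : E} (hα : α ∈ A) : K α ≤ KA K A :=
  le_biSup K hα

lemma KA_eq_closure (A : Set E) : KA K A = Subgroup.closure (⋃ α ∈ A, (K α : Set Γ)) :=
  le_antisymm (iSup₂_le fun _ hα _ hx => Subgroup.subset_closure (mem_biUnion hα hx))
    (Subgroup.closure_le _ |>.2 <| iUnion₂_subset fun _ hα => le_KA K hα)

lemma KA_le_normalizer_of_conj_mem {A B : Set E}
    (h : ∀ α ∈ A, ∀ β ∈ B, ∀ u ∈ K α, ∀ v ∈ K β, u * v * u⁻¹ ∈ KA K B) :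
    KA K A ≤ Subgroup.normalizer (KA K B : Set Γ) := by
  rw [KA_eq_closure K B]
  refine iSup₂_le fun α hα => Subgroup.le_normalizer_closure_iff.2 fun u hu v hv => ?_
  obtain ⟨β, hβ, hv⟩ := mem_iUnion₂.1 hv
  rw [← KA_eq_closure]
  exact h α hα β hβ u hu v hv

lemma IsGraded.KA_le_normalizer {Φ : Set E} (hgr : IsGraded Φ K) {A B : Set E}
    (hA : A ⊆ Φ) (hB : B ⊆ Φ) (hAB : ∀ α ∈ A, ∀ β ∈ B, ¬ ∃ c : ℝ, c < 0 ∧ β = c • α)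
    (hclosed : ∀ α ∈ A, ∀ β ∈ B, ∀ a b : ℝ, 1 ≤ a → 1 ≤ b →
      a • α + b • β ∈ Φ → a • α + b • β ∈ B) :
    KA K A ≤ Subgroup.normalizer (KA K B : Set Γ) := by
  refine KA_le_normalizer_of_conj_mem K fun α hα β hβ u hu v hv => ?_
  have hcomm : ⁅u, v⁆ ∈ KA K B := by
    refine KA_mono K ?_ (hgr.2 α (hA hα) β (hB hβ) (hAB α hα β hβ) u hu v hv)
    rintro γ ⟨hγ, a, b, ha, hb, rfl⟩
    exact hclosed α hα β hβ a b ha hb hγ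
  have hconj : u * v * u⁻¹ = ⁅u, v⁆ * v := by group
  rw [hconj]
  exact mul_mem hcomm (le_KA K hβ hv)

end RootSubgroups

lemma IsGeneralPosition.neg {Φ : Set E} {f : E →ₗ[ℝ] ℝ} (hf : IsGeneralPosition Φ f) :
    IsGeneralPosition Φ (-f) :=
  ⟨fun α hα => by simpa using hf.1 α hα, fun α hα β hβ h => by simpa using hf.2 α hα β hβ h⟩

namespace IsBorelSet

variable {Φ B : Set E} {α : E}

lemma subset (hB : IsBorelSet Φ B) : B ⊆ Φ := by
  obtain ⟨f, -, rfl⟩ := hB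
  exact fun _ h => h.1

lemma zero_notMem (hB : IsBorelSet Φ B) : (0 : E) ∉ B := by
  obtain ⟨f, -, rfl⟩ := hB
  simp

lemma smul_mem (hB : IsBorelSet Φ B) (hα : α ∈ B) {c : ℝ} (hc : 0 < c) (h : c • α ∈ Φ) :
    c • α ∈ B := by
  obtain ⟨f, -, rfl⟩ := hB
  exact ⟨h, by simpa using mul_pos hc hα.2⟩

lemma smul_add_smul_mem (hB : IsBorelSet Φ B) {β : E} (hα : α ∈ B) (hβ : β ∈ B) {a b : ℝ}
    (ha : 0 ≤ a) (hb : 0 < b) (h : a • α + b • β ∈ Φ) : a • α + b • β ∈ B := by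
  obtain ⟨f, -, rfl⟩ := hB
  refine ⟨h, ?_⟩
  simpa using add_pos_of_nonneg_of_pos (mul_nonneg ha hα.2.le) (mul_pos hb hβ.2)

lemma neg_mem_iff (hΦ : ∀ α ∈ Φ, -α ∈ Φ) (hB : IsBorelSet Φ B) (hα : α ∈ Φ) :
    -α ∈ B ↔ α ∉ B := by
  obtain ⟨f, hf, rfl⟩ := hB
  simp only [mem_ofPred_eq, map_neg, neg_pos, hΦ α hα, hα, true_and, not_lt]
  exact ⟨le_of_lt, fun h => lt_of_le_of_ne h (hf.1 α hα)⟩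

lemma neg (hΦ : ∀ α ∈ Φ, -α ∈ Φ) (hB : IsBorelSet Φ B) : IsBorelSet Φ (-B) := by
  obtain ⟨f, hf, rfl⟩ := hB
  refine ⟨-f, hf.neg, ext fun α => ?_⟩
  have hneg : -α ∈ Φ ↔ α ∈ Φ := ⟨fun h => by simpa using hΦ _ h, hΦ α⟩
  simp only [Set.mem_neg, mem_ofPred_eq, map_neg, LinearMap.neg_apply, hneg]

end IsBorelSet

lemma CoMaximal.neg {A B : Set E} (h : CoMaximal A B) : CoMaximal (-A) (-B) := by
  rwa [CoMaximal, CoMinimal, ← inter_neg, span_neg]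

section CoMaximalPair

variable {Φ Φ₁ Φ₂ : Set E}

lemma neg_mem_union_diff_inter (hΦ : ∀ α ∈ Φ, -α ∈ Φ) (h₁ : IsBorelSet Φ Φ₁)
    (h₂ : IsBorelSet Φ Φ₂) {α : E} (hα : α ∈ (Φ₁ ∪ Φ₂) \ (Φ₁ ∩ Φ₂)) :
    -α ∈ (Φ₁ ∪ Φ₂) \ (Φ₁ ∩ Φ₂) := by
  have hαΦ : α ∈ Φ := hα.1.elim (h₁.subset ·) (h₂.subset ·)
  simp only [mem_sdiff, mem_union, mem_inter_iff, h₁.neg_mem_iff hΦ hαΦ,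
    h₂.neg_mem_iff hΦ hαΦ] at hα ⊢
  tauto

lemma neg_union_diff_neg_inter (hΦ : ∀ α ∈ Φ, -α ∈ Φ) (h₁ : IsBorelSet Φ Φ₁)
    (h₂ : IsBorelSet Φ Φ₂) :
    (-Φ₁ ∪ -Φ₂) \ (-Φ₁ ∩ -Φ₂) = (Φ₁ ∪ Φ₂) \ (Φ₁ ∩ Φ₂) :=
  ext fun α => ⟨fun h => by simpa using neg_mem_union_diff_inter hΦ h₁ h₂ h,
    neg_mem_union_diff_inter hΦ h₁ h₂⟩

lemma union_diff_inter_subset_span (hΦ : ∀ α ∈ Φ, -α ∈ Φ) (h₁ : IsBorelSet Φ Φ₁)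
    (h₂ : IsBorelSet Φ Φ₂) : (Φ₁ ∪ Φ₂) \ (Φ₁ ∩ Φ₂) ⊆ span ℝ (Φ₁ ∩ -Φ₂) := by
  have hdiff : ∀ α ∈ Φ₁, α ∉ Φ₂ → α ∈ span ℝ (Φ₁ ∩ -Φ₂) := fun α hα₁ hα₂ =>
    subset_span ⟨hα₁, (h₂.neg_mem_iff hΦ (h₁.subset hα₁)).2 hα₂⟩
  intro α hα
  by_cases hα₁ : α ∈ Φ₁
  · exact hdiff α hα₁ fun hα₂ => hα.2 ⟨hα₁, hα₂⟩
  · have hα₂ : α ∈ Φ₂ := hα.1.resolve_left hα₁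
    rw [SetLike.mem_coe, ← Submodule.neg_mem_iff]
    refine hdiff (-α) ((h₁.neg_mem_iff hΦ (h₂.subset hα₂)).2 hα₁) ?_
    exact (h₂.neg_mem_iff hΦ (h₂.subset hα₂)).1.mt (not_not.2 hα₂)

lemma notMem_span_of_mem_inter (hΦ : ∀ α ∈ Φ, -α ∈ Φ) (h₁ : IsBorelSet Φ Φ₁)
    (h₂ : IsBorelSet Φ Φ₂) (hcm : CoMaximal Φ₁ Φ₂) {β : E} (hβ : β ∈ Φ₁ ∩ Φ₂) :
    β ∉ span ℝ (Φ₁ ∩ -Φ₂) := by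
  obtain ⟨δ, hδ⟩ : (Φ₁ ∩ -Φ₂).Nonempty := by
    by_contra h
    rw [not_nonempty_iff_eq_empty] at h
    rw [CoMaximal, CoMinimal, h, span_empty, finrank_bot] at hcm
    exact zero_ne_one hcm
  have hδ0 : δ ≠ 0 := fun h => h₁.zero_notMem (h ▸ hδ.1)
  rw [eq_span_singleton_of_mem_of_finrank_eq_one hcm (subset_span hδ) hδ0, mem_span_singleton]
  rintro ⟨c, rfl⟩
  have hβΦ : -(c • δ) ∈ Φ := hΦ _ (h₁.subset hβ.1)
  rcases lt_trichotomy c 0 with hc | rfl | hc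
  · have h := h₁.smul_mem hδ.1 (neg_pos.2 hc) (by rw [neg_smul]; exact hβΦ)
    rw [neg_smul, h₁.neg_mem_iff hΦ (h₁.subset hβ.1)] at h
    exact h hβ.1
  · exact h₁.zero_notMem (by simpa using hβ.1)
  · have h := h₂.smul_mem hδ.2 hc (by rw [smul_neg]; exact hβΦ)
    rw [smul_neg, h₂.neg_mem_iff hΦ (h₂.subset hβ.2)] at h
    exact h hβ.2

lemma smul_add_smul_mem_inter (hΦ : ∀ α ∈ Φ, -α ∈ Φ) (h₁ : IsBorelSet Φ Φ₁)
    (h₂ : IsBorelSet Φ Φ₂) (hcm : CoMaximal Φ₁ Φ₂) {α β : E}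
    (hα : α ∈ (Φ₁ ∪ Φ₂) \ (Φ₁ ∩ Φ₂)) (hβ : β ∈ Φ₁ ∩ Φ₂) {a b : ℝ} (ha : 0 ≤ a) (hb : 0 < b)
    (hγ : a • α + b • β ∈ Φ) : a • α + b • β ∈ Φ₁ ∩ Φ₂ := by
  set L := span ℝ (Φ₁ ∩ -Φ₂)
  have hαL : α ∈ L := union_diff_inter_subset_span hΦ h₁ h₂ hα
  have hγL : a • α + b • β ∉ L := fun h => notMem_span_of_mem_inter hΦ h₁ h₂ hcm hβ <| by
    have hbβ := L.sub_mem h (L.smul_mem a hαL)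
    rwa [add_sub_cancel_left, L.smul_mem_iff hb.ne'] at hbβ
  have hiff : a • α + b • β ∈ Φ₁ ↔ a • α + b • β ∈ Φ₂ := by
    by_contra h
    refine hγL (union_diff_inter_subset_span hΦ h₁ h₂ ?_)
    simp only [mem_sdiff, mem_union, mem_inter_iff]
    tauto
  rcases hα.1 with hα₁ | hα₂
  · have hγ₁ := h₁.smul_add_smul_mem hα₁ hβ.1 ha hb hγ
    exact ⟨hγ₁, hiff.1 hγ₁⟩
  · have hγ₂ := h₂.smul_add_smul_mem hα₂ hβ.2 ha hb hγ
    exact ⟨hiff.2 hγ₂, hγ₂⟩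

lemma KA_union_diff_inter_le_normalizer (hΦ : ∀ α ∈ Φ, -α ∈ Φ) {K : E → Subgroup Γ}
    (hgr : IsGraded Φ K) (h₁ : IsBorelSet Φ Φ₁) (h₂ : IsBorelSet Φ Φ₂)
    (hcm : CoMaximal Φ₁ Φ₂) :
    KA K ((Φ₁ ∪ Φ₂) \ (Φ₁ ∩ Φ₂)) ≤ Subgroup.normalizer (KA K (Φ₁ ∩ Φ₂) : Set Γ) := by
  refine hgr.KA_le_normalizer K ?_ (inter_subset_left.trans h₁.subset) ?_ ?_
  · exact union_subset h₁.subset h₂.subset |>.trans' sdiff_subset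
  · rintro α hα β hβ ⟨c, -, rfl⟩
    exact notMem_span_of_mem_inter hΦ h₁ h₂ hcm hβ <|
      smul_mem _ c (union_diff_inter_subset_span hΦ h₁ h₂ hα)
  · intro α hα β hβ a b ha hb hγ
    exact smul_add_smul_mem_inter hΦ h₁ h₂ hcm hα hβ (by linarith) (by linarith) hγ

end CoMaximalPair

/-- Let `Φ` be a root system and `Γ` a group graded by `Φ` with root
subgroups `{K_α}`.  If `Φ₁, Φ₂ ∈ Borel(Φ)` are co-maximal, then the subgroup
`K_{(Φ₁∪Φ₂)∖(Φ₁∩Φ₂)}` normalizes both `K_{Φ₁∩Φ₂}` and `K_{−(Φ₁∩Φ₂)}`. -/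
theorem comaximal_intersection_normalized
    (Φ : Set E) (hΦ : IsRootSystem Φ) (K : E → Subgroup Γ) (hgr : IsGraded Φ K)
    (Φ₁ Φ₂ : Set E) (h₁ : IsBorelSet Φ Φ₁) (h₂ : IsBorelSet Φ Φ₂)
    (hcm : CoMaximal Φ₁ Φ₂) :
    KA K ((Φ₁ ∪ Φ₂) \ (Φ₁ ∩ Φ₂)) ≤ Subgroup.normalizer (KA K (Φ₁ ∩ Φ₂) : Set Γ) ∧
    KA K ((Φ₁ ∪ Φ₂) \ (Φ₁ ∩ Φ₂)) ≤ Subgroup.normalizer (KA K (-(Φ₁ ∩ Φ₂)) : Set Γ) := by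
  have hneg : ∀ α ∈ Φ, -α ∈ Φ := hΦ.2.2.2
  refine ⟨KA_union_diff_inter_le_normalizer hneg hgr h₁ h₂ hcm, ?_⟩
  have h := KA_union_diff_inter_le_normalizer hneg hgr (h₁.neg hneg) (h₂.neg hneg) hcm.neg
  rwa [neg_union_diff_neg_inter hneg h₁ h₂, ← inter_neg] at h
end
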